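/- arXiv:1203.6433 — 8 statements merged into one kernel-verified Lean document; each statement's English description precedes it below -/
import Mathlib

section
/- If s > 1 and c > 0, then there exists a constant C > 0 such that for every positive integer j, the sum over l from 1 to infinity of l^{-s} * (1 + |j - l|)^{-s} is at most C * j^{-s}. -/
/-!
With `a = l + 1` and `b = 1 + |j - l - 1|` we have `a + b ≥ j`, so one of the two factors is at
least `j / 2`; bounding that factor by `(j / 2) ^ (-s)` leaves `a ^ (-s) + b ^ (-s)`, and both of
these sum (over `l`) to at most a constant: the first is `ζ(s)`, and the second is dominated by
`∑_{m ∈ ℤ} (1 + |m|) ^ (-s)` because `l ↦ j - l - 1` is injective.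
-/

open Real

lemma rpow_neg_mul_le_of_le_add {a b x s : ℝ} (ha : 0 < a) (hb : 0 < b) (hx : 0 < x)
    (hs : 0 ≤ s) (hab : x ≤ a + b) :
    (a * b) ^ (-s) ≤ (x / 2) ^ (-s) * (a ^ (-s) + b ^ (-s)) := by
  have hx2 : 0 < x / 2 := half_pos hx
  have hnegs : -s ≤ 0 := neg_nonpos.2 hs
  have ha' : 0 ≤ a ^ (-s) := rpow_nonneg ha.le _
  have hb' : 0 ≤ b ^ (-s) := rpow_nonneg hb.le _
  have hx' : 0 ≤ (x / 2) ^ (-s) := rpow_nonneg hx2.le _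
  rw [mul_rpow ha.le hb.le]
  rcases le_total (x / 2) a with hxa | hax
  · have : a ^ (-s) ≤ (x / 2) ^ (-s) := rpow_le_rpow_of_nonpos hx2 hxa hnegs
    nlinarith
  · have : b ^ (-s) ≤ (x / 2) ^ (-s) := rpow_le_rpow_of_nonpos hx2 (by linarith) hnegs
    nlinarith

lemma summable_nat_add_one_rpow_neg {s : ℝ} (hs : 1 < s) :
    Summable fun n : ℕ => ((n : ℝ) + 1) ^ (-s) := by
  have h := (summable_nat_add_iff 1).2 (summable_nat_rpow.2 (neg_lt_neg hs))
  simpa only [Nat.cast_add, Nat.cast_one] using h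

lemma summable_int_one_add_abs_rpow_neg {s : ℝ} (hs : 1 < s) :
    Summable fun m : ℤ => (1 + |(m : ℝ)|) ^ (-s) := by
  have h : Summable fun n : ℕ => (1 + |((n : ℤ) : ℝ)|) ^ (-s) := by
    simpa only [Int.cast_natCast, Nat.abs_cast, add_comm (1 : ℝ)]
      using summable_nat_add_one_rpow_neg hs
  exact .of_nat_of_neg h (by simpa only [Int.cast_neg, abs_neg] using h)

lemma injective_sub_natCast_add_one (j : ℤ) :
    Function.Injective fun l : ℕ => j - ((l : ℤ) + 1) :=
  fun l l' h => by simpa using h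

lemma summable_one_add_abs_sub_rpow_neg {s : ℝ} (hs : 1 < s) (j : ℕ) :
    Summable fun l : ℕ => (1 + |(j : ℝ) - ((l : ℝ) + 1)|) ^ (-s) := by
  have h :=
    (summable_int_one_add_abs_rpow_neg hs).comp_injective (injective_sub_natCast_add_one j)
  simpa only [Function.comp_def, Int.cast_sub, Int.cast_add, Int.cast_natCast, Int.cast_one]
    using h

lemma tsum_one_add_abs_sub_rpow_neg_le {s : ℝ} (hs : 1 < s) (j : ℕ) :
    ∑' l : ℕ, (1 + |(j : ℝ) - ((l : ℝ) + 1)|) ^ (-s) ≤ ∑' m : ℤ, (1 + |(m : ℝ)|) ^ (-s) := by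
  have h := tsum_comp_le_tsum_of_inj (summable_int_one_add_abs_rpow_neg hs)
    (fun m => rpow_nonneg (by positivity) _) (injective_sub_natCast_add_one j)
  simpa only [Function.comp_def, Int.cast_sub, Int.cast_add, Int.cast_natCast, Int.cast_one]
    using h

lemma tsum_rpow_neg_mul_one_add_abs_sub_le {s : ℝ} (hs : 1 < s) {j : ℕ} (hj : 1 ≤ j) :
    ∑' l : ℕ, ((l : ℝ) + 1) ^ (-s) * (1 + |(j : ℝ) - ((l : ℝ) + 1)|) ^ (-s)
      ≤ ((j : ℝ) / 2) ^ (-s) *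
          (∑' n : ℕ, ((n : ℝ) + 1) ^ (-s) + ∑' m : ℤ, (1 + |(m : ℝ)|) ^ (-s)) := by
  have hg := summable_nat_add_one_rpow_neg hs
  have hh := summable_one_add_abs_sub_rpow_neg hs j
  have hj0 : (0 : ℝ) < j := by exact_mod_cast hj
  have hpoint (l : ℕ) : ((l : ℝ) + 1) ^ (-s) * (1 + |(j : ℝ) - ((l : ℝ) + 1)|) ^ (-s)
      ≤ ((j : ℝ) / 2) ^ (-s) *
          (((l : ℝ) + 1) ^ (-s) + (1 + |(j : ℝ) - ((l : ℝ) + 1)|) ^ (-s)) := by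
    rw [← mul_rpow (by positivity) (by positivity)]
    exact rpow_neg_mul_le_of_le_add (by positivity) (by positivity) hj0 (by linarith)
      (by linarith [le_abs_self ((j : ℝ) - ((l : ℝ) + 1))])
  have hrhs := (hg.add hh).mul_left (((j : ℝ) / 2) ^ (-s))
  have hlhs := hrhs.of_nonneg_of_le (fun l => by positivity) hpoint
  calc _ ≤ _ := hlhs.tsum_le_tsum hpoint hrhs
    _ = ((j : ℝ) / 2) ^ (-s) * (∑' n : ℕ, ((n : ℝ) + 1) ^ (-s)
          + ∑' l : ℕ, (1 + |(j : ℝ) - ((l : ℝ) + 1)|) ^ (-s)) := by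
      rw [tsum_mul_left, hg.tsum_add hh]
    _ ≤ _ := by gcongr; exact tsum_one_add_abs_sub_rpow_neg_le hs j

theorem stmt_0_general (s : ℝ) (hs : 1 < s) :
    ∃ C : ℝ, 0 < C ∧ ∀ j : ℕ, 1 ≤ j →
      (∑' l : ℕ, ((l : ℝ) + 1) ^ (-s) * (1 + |(j : ℝ) - ((l : ℝ) + 1)|) ^ (-s))
        ≤ C * (j : ℝ) ^ (-s) := by
  set ζ := ∑' n : ℕ, ((n : ℝ) + 1) ^ (-s)
  set Z := ∑' m : ℤ, (1 + |(m : ℝ)|) ^ (-s)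
  have hζ : 0 < ζ := (summable_nat_add_one_rpow_neg hs).tsum_pos
    (fun n => rpow_nonneg (by positivity) _) 0 (by norm_num)
  have hZ : 0 ≤ Z := tsum_nonneg fun m => rpow_nonneg (by positivity) _
  refine ⟨2 ^ s * (ζ + Z), by positivity, fun j hj => ?_⟩
  have hhalf : ((j : ℝ) / 2) ^ (-s) = 2 ^ s * (j : ℝ) ^ (-s) := by
    rw [div_rpow (Nat.cast_nonneg j) zero_le_two, rpow_neg zero_le_two, div_inv_eq_mul, mul_comm]
  calc _ ≤ ((j : ℝ) / 2) ^ (-s) * (ζ + Z) := tsum_rpow_neg_mul_one_add_abs_sub_le hs hj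
    _ = 2 ^ s * (ζ + Z) * (j : ℝ) ^ (-s) := by rw [hhalf]; ring

/-- If `s > 1` and `c > 0`, there is `C > 0` such that for all positive
integers `j`, `∑_{l=1}^∞ l^{-s} (1 + |j - l|)^{-s} ≤ C j^{-s}`. -/
theorem stmt_0 (s c : ℝ) (hs : 1 < s) (hc : 0 < c) :
    ∃ C : ℝ, 0 < C ∧ ∀ j : ℕ, 1 ≤ j →
      (∑' l : ℕ, ((l : ℝ) + 1) ^ (-s) * (1 + |(j : ℝ) - ((l : ℝ) + 1)|) ^ (-s))
        ≤ C * (j : ℝ) ^ (-s) :=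
  stmt_0_general s hs
end

section
/- Let {ψ_j} be a frame for a separable Hilbert space H with frame operator S, and let f ∈ H satisfy |⟨f, ψ_j⟩| ≤ c j^{-s} for all j and some c > 0, s > 1. Assume the dual frame localization |⟨S^{-1}ψ_j, S^{-1}ψ_l⟩| ≤ c' (1 + |j - l|)^{-s} for all j, l. Then there exists C > 0 such that |⟨f, S^{-1}ψ_j⟩| ≤ C j^{-s} for all j. -/
/-!
Applying `S⁻¹` to the frame expansion `S f = ∑ ⟨ψ_l, f⟩ ψ_l` gives `f = ∑ ⟨ψ_l, f⟩ ψ̃_l`, so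
`⟨ψ̃_j, f⟩ = ∑ ⟨ψ_l, f⟩ ⟨ψ̃_j, ψ̃_l⟩` is dominated by the convolution
`∑_l (1 + l)^{-s} (1 + |j - l|)^{-s}`. Since `(1 + l) + (1 + |j - l|) ≥ 1 + j`, one of the two
factors is at most `2^s (1 + j)^{-s}`, and the other one is summable.
-/

open Function

noncomputable def polyWeight (s : ℝ) (k : ℤ) : ℝ := (1 + |(k : ℝ)|) ^ (-s)

namespace polyWeight

variable {s : ℝ}

lemma nonneg (s : ℝ) (k : ℤ) : 0 ≤ polyWeight s k := by
  unfold polyWeight; positivity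

lemma natCast (s : ℝ) (n : ℕ) : polyWeight s n = ((n : ℝ) + 1) ^ (-s) := by
  simp [polyWeight, add_comm]

lemma natCast_sub_natCast (s : ℝ) (j l : ℕ) :
    polyWeight s ((j : ℤ) - l) = (1 + |(j : ℝ) - l|) ^ (-s) := by
  simp [polyWeight]

lemma summable (hs : 1 < s) : Summable (polyWeight s) := by
  have hnat : Summable fun n : ℕ => ((n : ℝ) + 1) ^ (-s) := by
    simpa using (summable_nat_add_iff 1).mpr (Real.summable_nat_rpow.mpr (neg_lt_neg hs))
  refine .of_nat_of_neg ?_ ?_ <;> simpa [polyWeight, add_comm] using hnat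

lemma tsum_pos (hs : 1 < s) : 0 < ∑' k, polyWeight s k :=
  (summable hs).tsum_pos (nonneg s) 0 (by simp [polyWeight])

/-- Since `1 + |a + b| ≤ (1 + |a|) + (1 + |b|)`, one of `1 + |a|`, `1 + |b|` is at least
`(1 + |a + b|) / 2`. -/
lemma mul_le (hs : 0 ≤ s) (a b : ℤ) :
    polyWeight s a * polyWeight s b ≤
      2 ^ s * polyWeight s (a + b) * (polyWeight s a + polyWeight s b) := by
  have half_le : ∀ c : ℤ, (1 + |((a + b : ℤ) : ℝ)|) / 2 ≤ 1 + |(c : ℝ)| →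
      polyWeight s c ≤ 2 ^ s * polyWeight s (a + b) := by
    intro c hc
    calc polyWeight s c ≤ ((1 + |((a + b : ℤ) : ℝ)|) / 2) ^ (-s) :=
          Real.rpow_le_rpow_of_nonpos (by positivity) hc (neg_nonpos.mpr hs)
      _ = 2 ^ s * polyWeight s (a + b) := by
          rw [Real.div_rpow (by positivity) zero_le_two, Real.rpow_neg zero_le_two,
            div_inv_eq_mul, polyWeight]
          ring
  have htri : |((a + b : ℤ) : ℝ)| ≤ |(a : ℝ)| + |(b : ℝ)| := by
    push_cast; exact abs_add_le _ _
  have ha := nonneg s a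
  have hb := nonneg s b
  rcases le_total ((1 + |((a + b : ℤ) : ℝ)|) / 2) (1 + |(a : ℝ)|) with h | h
  · nlinarith [half_le a h]
  · nlinarith [half_le b (by linarith)]

lemma sub_natCast_injective (j : ℤ) : Injective fun l : ℕ => j - l :=
  fun _ _ h => by simpa using h

lemma mul_sub_le (hs : 0 ≤ s) (j : ℤ) (l : ℕ) :
    polyWeight s l * polyWeight s (j - l) ≤
      2 ^ s * polyWeight s j * (polyWeight s l + polyWeight s (j - l)) := by
  simpa using mul_le hs l (j - l)

lemma summable_natCast_add_sub_natCast (hs : 1 < s) (j : ℤ) :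
    Summable fun l : ℕ => polyWeight s l + polyWeight s (j - l) :=
  ((summable hs).comp_injective Nat.cast_injective).add
    ((summable hs).comp_injective (sub_natCast_injective j))

/-- Each value of `polyWeight s` is counted at most twice. -/
lemma tsum_natCast_add_sub_natCast_le (hs : 1 < s) (j : ℤ) :
    ∑' l : ℕ, (polyWeight s l + polyWeight s (j - l)) ≤ 2 * ∑' k, polyWeight s k := by
  have hi₁ : Injective fun l : ℕ => (l : ℤ) := Nat.cast_injective
  have hi₂ := sub_natCast_injective j
  have h₁ : Summable fun l : ℕ => polyWeight s l := (summable hs).comp_injective hi₁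
  have h₂ : Summable fun l : ℕ => polyWeight s (j - l) := (summable hs).comp_injective hi₂
  rw [h₁.tsum_add h₂, two_mul]
  exact add_le_add (tsum_comp_le_tsum_of_inj (summable hs) (nonneg s) hi₁)
    (tsum_comp_le_tsum_of_inj (summable hs) (nonneg s) hi₂)

lemma summable_mul_sub (hs : 1 < s) (j : ℤ) :
    Summable fun l : ℕ => polyWeight s l * polyWeight s (j - l) :=
  .of_nonneg_of_le (fun _ => mul_nonneg (nonneg s _) (nonneg s _)) (mul_sub_le (by linarith) j)
    ((summable_natCast_add_sub_natCast hs j).mul_left _)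

theorem tsum_mul_sub_le (hs : 1 < s) (j : ℤ) :
    ∑' l : ℕ, polyWeight s l * polyWeight s (j - l) ≤
      2 ^ s * (2 * ∑' k, polyWeight s k) * polyWeight s j := by
  calc ∑' l : ℕ, polyWeight s l * polyWeight s (j - l)
      ≤ ∑' l : ℕ, 2 ^ s * polyWeight s j * (polyWeight s l + polyWeight s (j - l)) :=
        (summable_mul_sub hs j).tsum_le_tsum (mul_sub_le (by linarith) j)
          ((summable_natCast_add_sub_natCast hs j).mul_left _)
    _ = 2 ^ s * polyWeight s j * ∑' l : ℕ, (polyWeight s l + polyWeight s (j - l)) :=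
        tsum_mul_left
    _ ≤ 2 ^ s * polyWeight s j * (2 * ∑' k, polyWeight s k) :=
        mul_le_mul_of_nonneg_left (tsum_natCast_add_sub_natCast_le hs j)
          (mul_nonneg (by positivity) (nonneg s j))
    _ = 2 ^ s * (2 * ∑' k, polyWeight s k) * polyWeight s j := by ring

end polyWeight

theorem hasSum_inner_smul_dual_frame {𝕜 H : Type*} [RCLike 𝕜] [NormedAddCommGroup H]
    [InnerProductSpace 𝕜 H] {ψ : ℕ → H} {S : H → H} {Sinv : H →L[𝕜] H}
    (hS : ∀ f, HasSum (fun j => (inner 𝕜 (ψ j) f : 𝕜) • ψ j) (S f))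
    (hSinv : ∀ f, Sinv (S f) = f) (f : H) :
    HasSum (fun l => (inner 𝕜 (ψ l) f : 𝕜) • Sinv (ψ l)) f := by
  simpa [hSinv f] using Sinv.hasSum (hS f)

theorem stmt_5_general {H : Type*} [NormedAddCommGroup H] [InnerProductSpace ℂ H]
    (ψ : ℕ → H)
    (S Sinv : H →L[ℂ] H)
    (hS : ∀ f : H, HasSum (fun j : ℕ => (inner ℂ (ψ j) f : ℂ) • ψ j) (S f))
    (hSinv₁ : ∀ f, Sinv (S f) = f)
    (c c' s : ℝ) (hc : 0 < c) (hc' : 0 < c') (hs : 1 < s)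
    (f : H)
    (hdecay : ∀ j : ℕ, ‖(inner ℂ (ψ j) f : ℂ)‖ ≤ c * ((j : ℝ) + 1) ^ (-s))
    (hdual : ∀ j l : ℕ,
      ‖(inner ℂ (Sinv (ψ j)) (Sinv (ψ l)) : ℂ)‖ ≤ c' * (1 + |(j : ℝ) - (l : ℝ)|) ^ (-s)) :
    ∃ C : ℝ, 0 < C ∧ ∀ j : ℕ, ‖(inner ℂ (Sinv (ψ j)) f : ℂ)‖ ≤ C * ((j : ℝ) + 1) ^ (-s) := by
  have hW := polyWeight.tsum_pos hs
  refine ⟨c * c' * (2 ^ s * (2 * ∑' k, polyWeight s k)), by positivity, fun j => ?_⟩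
  have hcoeff : HasSum (fun l => (inner ℂ (ψ l) f : ℂ) * inner ℂ (Sinv (ψ j)) (Sinv (ψ l)))
      (inner ℂ (Sinv (ψ j)) f) := by
    simpa [inner_smul_right] using
      (innerSL ℂ (Sinv (ψ j))).hasSum (hasSum_inner_smul_dual_frame hS hSinv₁ f)
  have hterm : ∀ l : ℕ, ‖(inner ℂ (ψ l) f : ℂ) * inner ℂ (Sinv (ψ j)) (Sinv (ψ l))‖ ≤
      c * c' * (polyWeight s l * polyWeight s ((j : ℤ) - l)) := by
    intro l
    rw [norm_mul, polyWeight.natCast, polyWeight.natCast_sub_natCast, mul_mul_mul_comm]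
    exact mul_le_mul (hdecay l) (hdual j l) (norm_nonneg _) (by positivity)
  calc ‖(inner ℂ (Sinv (ψ j)) f : ℂ)‖
      ≤ c * c' * ∑' l : ℕ, polyWeight s l * polyWeight s ((j : ℤ) - l) :=
        hcoeff.norm_le_of_bounded ((polyWeight.summable_mul_sub hs j).hasSum.mul_left _) hterm
    _ ≤ c * c' * (2 ^ s * (2 * ∑' k, polyWeight s k) * polyWeight s j) := by
        gcongr; exact polyWeight.tsum_mul_sub_le hs j
    _ = _ := by rw [polyWeight.natCast]; ring

/-- Lemma 3.1: If the frame coefficients of `f` decay like `c j^{-s}` with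
`s > 1`, and the dual frame `ψ̃_j = S⁻¹ψ_j` is self-localized with rate `s`, then the dual
frame coefficients `⟨f, ψ̃_j⟩` decay like `C j^{-s}`.  (Indices shifted by one: `ψ j`
represents `ψ_{j+1}`.) -/
theorem stmt_5 {H : Type*} [NormedAddCommGroup H] [InnerProductSpace ℂ H]
    [CompleteSpace H] [TopologicalSpace.SeparableSpace H]
    (ψ : ℕ → H) (A B : ℝ) (hA : 0 < A) (hB : 0 < B)
    (hsum : ∀ f : H, Summable fun j : ℕ => ‖(inner ℂ (ψ j) f : ℂ)‖ ^ 2)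
    (hlow : ∀ f : H, A * ‖f‖ ^ 2 ≤ ∑' j : ℕ, ‖(inner ℂ (ψ j) f : ℂ)‖ ^ 2)
    (hup : ∀ f : H, (∑' j : ℕ, ‖(inner ℂ (ψ j) f : ℂ)‖ ^ 2) ≤ B * ‖f‖ ^ 2)
    (S Sinv : H →L[ℂ] H)
    (hS : ∀ f : H, HasSum (fun j : ℕ => (inner ℂ (ψ j) f : ℂ) • ψ j) (S f))
    (hSinv₁ : ∀ f, Sinv (S f) = f) (hSinv₂ : ∀ f, S (Sinv f) = f)
    (c c' s : ℝ) (hc : 0 < c) (hc' : 0 < c') (hs : 1 < s)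
    (f : H)
    (hdecay : ∀ j : ℕ, ‖(inner ℂ (ψ j) f : ℂ)‖ ≤ c * ((j : ℝ) + 1) ^ (-s))
    (hdual : ∀ j l : ℕ,
      ‖(inner ℂ (Sinv (ψ j)) (Sinv (ψ l)) : ℂ)‖ ≤ c' * (1 + |(j : ℝ) - (l : ℝ)|) ^ (-s)) :
    ∃ C : ℝ, 0 < C ∧ ∀ j : ℕ, ‖(inner ℂ (Sinv (ψ j)) f : ℂ)‖ ≤ C * ((j : ℝ) + 1) ^ (-s) :=
  stmt_5_general ψ S Sinv hS hSinv₁ c c' s hc hc' hs f hdecay hdual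
end

section
/- Let {ψ_j} be a frame for H with frame operator S and dual frame ψ̃_j = S^{-1}ψ_j satisfying the self-localization |⟨ψ̃_j, ψ̃_l⟩| ≤ c (1 + |j - l|)^{-s} with s > 1, and let f satisfy |⟨f, ψ_j⟩| ≤ c j^{-s}. Let P_n be the orthogonal projection onto H_n = span{ψ_1, …, ψ_n}. Then there exists C > 0 such that ‖f − P_n f‖ ≤ C n^{-(s-1/2)} for all n. -/
/-!
Expanding `f = ∑ ⟪ψ_l, f⟫ ψ̃_l` shows that the dual-frame coefficients
`a_j = ⟪ψ̃_j, f⟫ = ∑_l ⟪ψ_l, f⟫ ⟪ψ̃_j, ψ̃_l⟫` are the image of the decaying sequence `⟪ψ_l, f⟫`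
under the localized Gram matrix of the dual frame. Since one of `1 + |l|`, `1 + |j - l|` is at least
`(1 + |j|) / 2`, the convolution of two `(1 + |·|)^{-s}` weights is again `O((1 + |j|)^{-s})`, so
`a_j = O(j^{-s})`. The truncation `∑_{j<n} a_j ψ_j ∈ H_n` of `f = ∑ a_j ψ_j` is then within
`√B (∑_{j≥n} |a_j|²)^{1/2} = O(n^{1/2-s})` of `f` by the upper frame bound, and `P_n f` is at least
as close to `f`.
-/

lemma rpow_neg_mul_rpow_neg_le_of_le_add {s u v t : ℝ} (hs : 0 ≤ s) (hu : 0 < u) (hv : 0 < v)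
    (ht : 0 < t) (htuv : t ≤ u + v) :
    u ^ (-s) * v ^ (-s) ≤ 2 ^ s * t ^ (-s) * (u ^ (-s) + v ^ (-s)) := by
  have half : ∀ w, t ≤ 2 * w → w ^ (-s) ≤ 2 ^ s * t ^ (-s) := fun w hw => by
    calc w ^ (-s) ≤ (t / 2) ^ (-s) := Real.rpow_le_rpow_of_nonpos (by positivity) (by linarith)
          (by linarith)
      _ = 2 ^ s * t ^ (-s) := by
        rw [Real.div_rpow ht.le zero_le_two, Real.rpow_neg zero_le_two, div_inv_eq_mul, mul_comm]
  have hu' := Real.rpow_nonneg hu.le (-s)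
  have hv' := Real.rpow_nonneg hv.le (-s)
  have h2t : 0 ≤ 2 ^ s * t ^ (-s) := by positivity
  rcases le_total u v with huv | hvu
  · have := mul_le_mul_of_nonneg_left (half v (by linarith)) hu'
    nlinarith
  · have := mul_le_mul_of_nonneg_right (half u (by linarith)) hv'
    nlinarith

noncomputable def decayWeight (s : ℝ) (m : ℤ) : ℝ := (1 + |(m : ℝ)|) ^ (-s)

namespace decayWeight

variable {𝕜 : Type*} [RCLike 𝕜] {s : ℝ}

lemma nonneg (s : ℝ) (m : ℤ) : 0 ≤ decayWeight s m := by
  unfold decayWeight; positivity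

lemma le_one (hs : 0 ≤ s) (m : ℤ) : decayWeight s m ≤ 1 :=
  Real.rpow_le_one_of_one_le_of_nonpos (by simp) (by linarith)

@[simp] lemma natCast (s : ℝ) (n : ℕ) : decayWeight s n = ((n : ℝ) + 1) ^ (-s) := by
  simp [decayWeight, add_comm]

lemma summable (hs : 1 < s) : Summable (decayWeight s) := by
  have h : Summable fun n : ℕ => ((n : ℝ) + 1) ^ (-s) := by
    simpa using (summable_nat_add_iff 1).mpr (Real.summable_nat_rpow.mpr (neg_lt_neg hs))
  refine .of_nat_of_neg ?_ ?_ <;> simpa [decayWeight, add_comm] using h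

lemma mul_le (hs : 0 ≤ s) (j l : ℤ) :
    decayWeight s l * decayWeight s (j - l) ≤
      2 ^ s * decayWeight s j * (decayWeight s l + decayWeight s (j - l)) := by
  have : |(j : ℝ)| ≤ |(l : ℝ)| + |((j - l : ℤ) : ℝ)| := by
    push_cast; simpa using abs_add_le (l : ℝ) (j - l)
  exact rpow_neg_mul_rpow_neg_le_of_le_add hs (by positivity) (by positivity) (by positivity)
    (by linarith)

lemma summable_mul (hs : 1 < s) (j : ℤ) :
    Summable fun l => decayWeight s l * decayWeight s (j - l) :=
  (summable hs).of_nonneg_of_le (fun l => mul_nonneg (nonneg s l) (nonneg s _))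
    fun l => mul_le_of_le_one_right (nonneg s l) (le_one (by linarith) _)

lemma tsum_mul_le (hs : 1 < s) (j : ℤ) :
    ∑' l, decayWeight s l * decayWeight s (j - l) ≤
      2 ^ s * 2 * (∑' m, decayWeight s m) * decayWeight s j := by
  have hsub : ∑' l, decayWeight s (j - l) = ∑' m, decayWeight s m :=
    (Equiv.subLeft j).tsum_eq (decayWeight s)
  have hsub' : Summable fun l => decayWeight s (j - l) :=
    (Equiv.subLeft j).summable_iff.mpr (summable hs)
  calc ∑' l, decayWeight s l * decayWeight s (j - l)
      ≤ ∑' l, 2 ^ s * decayWeight s j * (decayWeight s l + decayWeight s (j - l)) :=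
        (summable_mul hs j).tsum_le_tsum (mul_le (by linarith) j)
          (((summable hs).add hsub').mul_left _)
    _ = 2 ^ s * 2 * (∑' m, decayWeight s m) * decayWeight s j := by
        rw [tsum_mul_left, (summable hs).tsum_add hsub', hsub]; ring

lemma sq (s : ℝ) (m : ℤ) : decayWeight s m ^ 2 = decayWeight (2 * s) m := by
  rw [decayWeight, decayWeight, ← Real.rpow_natCast, ← Real.rpow_mul (by positivity)]
  ring_nf

lemma summable_nat_add (hs : 1 < s) (n : ℕ) : Summable fun k : ℕ => decayWeight s (k + n : ℕ) :=
  (summable hs).comp_injective (Nat.cast_injective.comp (add_left_injective n))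

lemma tsum_nat_add_le {r : ℝ} (hr : 1 < r) {n : ℕ} (hn : 0 < n) :
    ∑' k : ℕ, decayWeight r (k + n : ℕ) ≤ (n : ℝ) ^ (1 - r) / (r - 1) := by
  have hn' : (0 : ℝ) < n := by exact_mod_cast hn
  have hanti : ∀ m : ℕ, AntitoneOn (fun x : ℝ => x ^ (-r)) (Set.Icc n (n + m)) :=
    fun m x hx y _ hxy => Real.rpow_le_rpow_of_nonpos (hn'.trans_le hx.1) hxy (by linarith)
  have hint : ∀ m : ℕ, ∫ x in (n : ℝ)..n + m, x ^ (-r) =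
      ((n : ℝ) ^ (1 - r) - (n + m : ℝ) ^ (1 - r)) / (r - 1) := fun m => by
    rw [integral_rpow (Or.inr ⟨by linarith, Set.notMem_uIcc_of_lt hn' (by positivity)⟩),
      ← neg_div_neg_eq]
    ring_nf
  refine (summable_nat_add hr n).tsum_le_of_sum_range_le fun m => ?_
  calc ∑ k ∈ Finset.range m, decayWeight r (k + n : ℕ)
      = ∑ k ∈ Finset.range m, ((n : ℝ) + ((k + 1 : ℕ) : ℝ)) ^ (-r) := by
        refine Finset.sum_congr rfl fun k _ => ?_
        rw [natCast]; push_cast; ring_nf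
    _ ≤ ∫ x in (n : ℝ)..n + m, x ^ (-r) := (hanti m).sum_le_integral
    _ ≤ (n : ℝ) ^ (1 - r) / (r - 1) := by
        rw [hint]
        gcongr
        exact sub_le_self _ (by positivity)

lemma norm_le_of_hasSum_mul {x k : ℕ → 𝕜} {y : 𝕜} {c c' : ℝ} (hs : 1 < s) (hc : 0 ≤ c)
    (hc' : 0 ≤ c') {j : ℤ} (hy : HasSum (fun l => x l * k l) y)
    (hx : ∀ l : ℕ, ‖x l‖ ≤ c * decayWeight s l) (hk : ∀ l : ℕ, ‖k l‖ ≤ c' * decayWeight s (j - l)) :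
    ‖y‖ ≤ c * c' * (2 ^ s * 2 * ∑' m, decayWeight s m) * decayWeight s j := by
  have hbound : ∀ l : ℕ, ‖x l * k l‖ ≤ c * c' * (decayWeight s l * decayWeight s (j - l)) :=
    fun l => by
      rw [norm_mul, mul_mul_mul_comm]
      exact mul_le_mul (hx l) (hk l) (norm_nonneg _) (mul_nonneg hc (nonneg s l))
  calc ‖y‖ ≤ ∑' l : ℕ, c * c' * (decayWeight s l * decayWeight s (j - l)) :=
        hy.norm_le_of_bounded
          (((summable_mul hs j).comp_injective Nat.cast_injective).mul_left _).hasSum hbound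
    _ ≤ c * c' * ∑' l : ℤ, decayWeight s l * decayWeight s (j - l) := by
        rw [tsum_mul_left]
        gcongr
        exact tsum_comp_le_tsum_of_inj (summable_mul hs j)
          (fun l => mul_nonneg (nonneg s l) (nonneg s _)) Nat.cast_injective
    _ ≤ c * c' * (2 ^ s * 2 * ∑' m, decayWeight s m) * decayWeight s j := by
        rw [mul_assoc (c * c')]
        gcongr
        exact tsum_mul_le hs j

end decayWeight

section InnerProductSpace

open scoped InnerProductSpace

variable {𝕜 E : Type*} [RCLike 𝕜] [NormedAddCommGroup E] [InnerProductSpace 𝕜 E]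

lemma norm_sub_le_norm_sub_of_inner_eq_zero {K : Submodule 𝕜 E} {x p y : E} (hp : p ∈ K)
    (horth : ∀ h ∈ K, ⟪x - p, h⟫_𝕜 = 0) (hy : y ∈ K) : ‖x - p‖ ≤ ‖x - y‖ := by
  have hpy := norm_add_sq_eq_norm_sq_add_norm_sq_of_inner_eq_zero (x - p) (p - y)
    (horth _ (K.sub_mem hp hy))
  rw [sub_add_sub_cancel] at hpy
  exact (mul_self_le_mul_self_iff (norm_nonneg _) (norm_nonneg _)).mpr <|
    hpy ▸ le_add_of_nonneg_right (mul_self_nonneg _)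

lemma LinearMap.IsSymmetric.of_rightInverse {T T' : E →ₗ[𝕜] E} (hT : T.IsSymmetric)
    (hT' : Function.RightInverse T' T) : T'.IsSymmetric := fun x y => by
  conv_lhs => rw [← hT' y]
  rw [← hT, hT' x]

variable {ι : Type*}

lemma isSymmetric_of_hasSum_inner_smul {ψ : ι → E} {S : E →ₗ[𝕜] E}
    (hS : ∀ f, HasSum (fun i => ⟪ψ i, f⟫_𝕜 • ψ i) (S f)) : S.IsSymmetric := fun g h => by
  have hg := ((hS g).mapL (innerSL 𝕜 h)).star
  have hh := (hS h).mapL (innerSL 𝕜 g)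
  simp only [innerSL_apply_apply, inner_smul_right, star_mul', RCLike.star_def, inner_conj_symm]
    at hg hh
  exact hg.unique (by simpa only [mul_comm] using hh)

lemma norm_sum_smul_sq_le {φ : ι → E} {B : ℝ} (hB : 0 ≤ B)
    (hφ : ∀ x (F : Finset ι), ∑ i ∈ F, ‖⟪φ i, x⟫_𝕜‖ ^ 2 ≤ B * ‖x‖ ^ 2) (b : ι → 𝕜)
    (F : Finset ι) : ‖∑ i ∈ F, b i • φ i‖ ^ 2 ≤ B * ∑ i ∈ F, ‖b i‖ ^ 2 := by
  set v := ∑ i ∈ F, b i • φ i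
  have hv : ‖v‖ ^ 2 ≤ ∑ i ∈ F, ‖b i‖ * ‖⟪φ i, v⟫_𝕜‖ := calc
    ‖v‖ ^ 2 = ‖⟪v, v⟫_𝕜‖ := by rw [inner_self_eq_norm_sq_to_K]; simp
    _ = ‖∑ i ∈ F, starRingEnd 𝕜 (b i) * ⟪φ i, v⟫_𝕜‖ := by
        simp only [v, sum_inner, inner_smul_left]
    _ ≤ ∑ i ∈ F, ‖b i‖ * ‖⟪φ i, v⟫_𝕜‖ := by
        simpa only [norm_mul, RCLike.norm_conj] using
          norm_sum_le F fun i => starRingEnd 𝕜 (b i) * ⟪φ i, v⟫_𝕜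
  rcases (norm_nonneg v).eq_or_lt with hv0 | hvpos
  · rw [← hv0, sq, zero_mul]
    exact mul_nonneg hB (by positivity)
  refine le_of_mul_le_mul_right ?_ (by positivity : 0 < ‖v‖ ^ 2)
  calc ‖v‖ ^ 2 * ‖v‖ ^ 2 ≤ (∑ i ∈ F, ‖b i‖ * ‖⟪φ i, v⟫_𝕜‖) ^ 2 := by
        rw [← sq]; exact pow_le_pow_left₀ (by positivity) hv 2
    _ ≤ (∑ i ∈ F, ‖b i‖ ^ 2) * ∑ i ∈ F, ‖⟪φ i, v⟫_𝕜‖ ^ 2 :=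
        Finset.sum_mul_sq_le_sq_mul_sq F _ _
    _ ≤ (∑ i ∈ F, ‖b i‖ ^ 2) * (B * ‖v‖ ^ 2) :=
        mul_le_mul_of_nonneg_left (hφ v F) (by positivity)
    _ = (B * ∑ i ∈ F, ‖b i‖ ^ 2) * ‖v‖ ^ 2 := by ring

lemma norm_sq_le_of_hasSum_smul {φ : ι → E} {B : ℝ} (hB : 0 ≤ B)
    (hφ : ∀ x (F : Finset ι), ∑ i ∈ F, ‖⟪φ i, x⟫_𝕜‖ ^ 2 ≤ B * ‖x‖ ^ 2) {b : ι → 𝕜}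
    (hb : Summable fun i => ‖b i‖ ^ 2) {v : E} (hv : HasSum (fun i => b i • φ i) v) :
    ‖v‖ ^ 2 ≤ B * ∑' i, ‖b i‖ ^ 2 :=
  le_of_tendsto ((continuous_norm.pow 2).tendsto v |>.comp hv) <| .of_forall fun F =>
    (norm_sum_smul_sq_le hB hφ b F).trans <|
      mul_le_mul_of_nonneg_left (hb.sum_le_tsum F fun _ _ => by positivity) hB

lemma sum_norm_inner_comp_sq_le {κ : Type*} {ψ : κ → E} {B : ℝ}
    (hsum : ∀ x, Summable fun j => ‖⟪ψ j, x⟫_𝕜‖ ^ 2)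
    (hup : ∀ x, ∑' j, ‖⟪ψ j, x⟫_𝕜‖ ^ 2 ≤ B * ‖x‖ ^ 2) {e : ι → κ} (he : e.Injective) (x : E)
    (F : Finset ι) : ∑ i ∈ F, ‖⟪ψ (e i), x⟫_𝕜‖ ^ 2 ≤ B * ‖x‖ ^ 2 := by
  calc ∑ i ∈ F, ‖⟪ψ (e i), x⟫_𝕜‖ ^ 2 = ∑ j ∈ F.map ⟨e, he⟩, ‖⟪ψ j, x⟫_𝕜‖ ^ 2 :=
        by rw [Finset.sum_map]; rfl
    _ ≤ B * ‖x‖ ^ 2 := ((hsum x).sum_le_tsum _ fun _ _ => by positivity).trans (hup x)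

variable {ψ : ℕ → E} {s : ℝ}

lemma norm_sub_sum_range_le {B C : ℝ} (hB : 0 ≤ B)
    (hsum : ∀ x, Summable fun j => ‖⟪ψ j, x⟫_𝕜‖ ^ 2)
    (hup : ∀ x, ∑' j, ‖⟪ψ j, x⟫_𝕜‖ ^ 2 ≤ B * ‖x‖ ^ 2) {a : ℕ → 𝕜} {f : E}
    (hf : HasSum (fun j => a j • ψ j) f) (hs : 1 < s) (hC : 0 ≤ C)
    (ha : ∀ j : ℕ, ‖a j‖ ≤ C * decayWeight s j) {n : ℕ} (hn : 0 < n) :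
    ‖f - ∑ j ∈ Finset.range n, a j • ψ j‖ ≤
      C * √(B / (2 * s - 1)) * (n : ℝ) ^ (-(s - 1 / 2)) := by
  have hsq : ∀ k : ℕ, ‖a (k + n)‖ ^ 2 ≤ C ^ 2 * decayWeight (2 * s) (k + n : ℕ) := fun k => by
    rw [← decayWeight.sq, ← mul_pow]
    exact pow_le_pow_left₀ (norm_nonneg _) (ha _) 2
  have hw := decayWeight.summable_nat_add (s := 2 * s) (by linarith) n
  have hsummable : Summable fun k => ‖a (k + n)‖ ^ 2 :=
    (hw.mul_left _).of_nonneg_of_le (fun _ => by positivity) hsq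
  have htail := norm_sq_le_of_hasSum_smul hB (sum_norm_inner_comp_sq_le hsum hup
    (add_left_injective n)) hsummable ((hasSum_nat_add_iff' n).mpr hf)
  refine (pow_le_pow_iff_left₀ (norm_nonneg _) (by positivity) two_ne_zero).mp ?_
  have hpow : ((n : ℝ) ^ (-(s - 1 / 2))) ^ 2 = (n : ℝ) ^ (1 - 2 * s) := by
    rw [← Real.rpow_mul_natCast (Nat.cast_nonneg n)]
    ring_nf
  calc _ ≤ B * ∑' k, ‖a (k + n)‖ ^ 2 := htail
    _ ≤ B * ∑' k, C ^ 2 * decayWeight (2 * s) (k + n : ℕ) :=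
        mul_le_mul_of_nonneg_left (hsummable.tsum_le_tsum hsq (hw.mul_left _)) hB
    _ ≤ B * (C ^ 2 * ((n : ℝ) ^ (1 - 2 * s) / (2 * s - 1))) := by
        rw [tsum_mul_left]
        gcongr
        exact decayWeight.tsum_nat_add_le (by linarith) hn
    _ = (C * √(B / (2 * s - 1)) * (n : ℝ) ^ (-(s - 1 / 2))) ^ 2 := by
        rw [mul_pow, mul_pow, Real.sq_sqrt (div_nonneg hB (by linarith)), hpow]
        ring

lemma norm_inner_apply_inverse_le {S Sinv : E →L[𝕜] E}
    (hS : ∀ f, HasSum (fun j => ⟪ψ j, f⟫_𝕜 • ψ j) (S f))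
    (hSinv₁ : ∀ f, Sinv (S f) = f) (hSinv₂ : ∀ f, S (Sinv f) = f) {c : ℝ} (hs : 1 < s)
    (hc : 0 ≤ c) (hdualloc : ∀ j l : ℕ, ‖⟪Sinv (ψ j), Sinv (ψ l)⟫_𝕜‖ ≤ c * decayWeight s (j - l))
    {f : E} (hdecay : ∀ j : ℕ, ‖⟪ψ j, f⟫_𝕜‖ ≤ c * decayWeight s j) (j : ℕ) :
    ‖⟪ψ j, Sinv f⟫_𝕜‖ ≤ c * c * (2 ^ s * 2 * ∑' m, decayWeight s m) * decayWeight s j := by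
  have hsymm : (Sinv : E →ₗ[𝕜] E).IsSymmetric :=
    (isSymmetric_of_hasSum_inner_smul (S := (S : E →ₗ[𝕜] E)) hS).of_rightInverse hSinv₂
  -- `⟪ψ j, Sinv f⟫ = ⟪Sinv (ψ j), f⟫` and `f = ∑ ⟪ψ l, f⟫ • Sinv (ψ l)`
  have hexp := ((hS f).mapL Sinv).mapL (innerSL 𝕜 (Sinv (ψ j)))
  simp only [hSinv₁, map_smul, innerSL_apply_apply, smul_eq_mul] at hexp
  rw [← ContinuousLinearMap.coe_coe Sinv, ← hsymm]
  exact decayWeight.norm_le_of_hasSum_mul hs hc hc hexp hdecay (hdualloc j)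

end InnerProductSpace

theorem stmt_6_general {H : Type*} [NormedAddCommGroup H] [InnerProductSpace ℂ H]
    (ψ : ℕ → H) (B : ℝ) (hB : 0 < B)
    (hsum : ∀ f : H, Summable fun j : ℕ => ‖(inner ℂ (ψ j) f : ℂ)‖ ^ 2)
    (hup : ∀ f : H, (∑' j : ℕ, ‖(inner ℂ (ψ j) f : ℂ)‖ ^ 2) ≤ B * ‖f‖ ^ 2)
    (S Sinv : H →L[ℂ] H)
    (hS : ∀ f : H, HasSum (fun j : ℕ => (inner ℂ (ψ j) f : ℂ) • ψ j) (S f))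
    (hSinv₁ : ∀ f, Sinv (S f) = f) (hSinv₂ : ∀ f, S (Sinv f) = f)
    (c s : ℝ) (hc : 0 < c) (hs : 1 < s)
    (hdualloc : ∀ j l : ℕ,
      ‖(inner ℂ (Sinv (ψ j)) (Sinv (ψ l)) : ℂ)‖ ≤ c * (1 + |(j : ℝ) - (l : ℝ)|) ^ (-s))
    (f : H)
    (hdecay : ∀ j : ℕ, ‖(inner ℂ (ψ j) f : ℂ)‖ ≤ c * ((j : ℝ) + 1) ^ (-s))
    (P : ℕ → H → H)
    (hPmem : ∀ n g, P n g ∈ Submodule.span ℂ (ψ '' {i | i < n}))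
    (hPorth : ∀ n g, ∀ h ∈ Submodule.span ℂ (ψ '' {i | i < n}),
      (inner ℂ (g - P n g) h : ℂ) = 0) :
    ∃ C : ℝ, 0 < C ∧ ∀ n : ℕ, 1 ≤ n →
      ‖f - P n f‖ ≤ C * (n : ℝ) ^ (-(s - 1 / 2)) := by
  set K := 2 ^ s * 2 * ∑' m, decayWeight s m
  have hK : 0 < K := by
    have := (decayWeight.summable hs).tsum_pos (decayWeight.nonneg s) 0 (by simp [decayWeight])
    positivity
  have hcoeff := norm_inner_apply_inverse_le hS hSinv₁ hSinv₂ hs hc.le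
    (fun j l => by simpa [decayWeight] using hdualloc j l) (fun j => by simpa using hdecay j)
  have hf : HasSum (fun j => (inner ℂ (ψ j) (Sinv f) : ℂ) • ψ j) f := by
    simpa only [hSinv₂] using hS (Sinv f)
  refine ⟨c * c * K * √(B / (2 * s - 1)),
    mul_pos (by positivity) (Real.sqrt_pos.mpr (div_pos hB (by linarith))), fun n hn => ?_⟩
  have hmem : ∑ j ∈ Finset.range n, (inner ℂ (ψ j) (Sinv f) : ℂ) • ψ j ∈
      Submodule.span ℂ (ψ '' {i | i < n}) :=
    Submodule.sum_mem _ fun j hj =>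
      Submodule.smul_mem _ _ (Submodule.subset_span ⟨j, Finset.mem_range.mp hj, rfl⟩)
  calc ‖f - P n f‖ ≤ ‖f - ∑ j ∈ Finset.range n, (inner ℂ (ψ j) (Sinv f) : ℂ) • ψ j‖ :=
        norm_sub_le_norm_sub_of_inner_eq_zero (hPmem n f) (hPorth n f) hmem
    _ ≤ _ := norm_sub_sum_range_le hB.le hsum hup hf hs (by positivity) hcoeff hn

/-- Lemma 3.2: under intrinsic localization of the frame and dual frame with
rate `s > 1` and coefficient decay `|⟨f,ψ_j⟩| ≤ c j^{-s}`, the orthogonal projection `P n`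
onto `H_n = span{ψ_1,…,ψ_n}` satisfies `‖f - P_n f‖ ≤ C n^{-(s-1/2)}`.
(Indices shifted by one: `ψ j` represents `ψ_{j+1}`, so `H_n` is spanned by `ψ i`, `i < n`.) -/
theorem stmt_6 {H : Type*} [NormedAddCommGroup H] [InnerProductSpace ℂ H]
    [CompleteSpace H] [TopologicalSpace.SeparableSpace H]
    (ψ : ℕ → H) (A B : ℝ) (hA : 0 < A) (hB : 0 < B)
    (hsum : ∀ f : H, Summable fun j : ℕ => ‖(inner ℂ (ψ j) f : ℂ)‖ ^ 2)
    (hlow : ∀ f : H, A * ‖f‖ ^ 2 ≤ ∑' j : ℕ, ‖(inner ℂ (ψ j) f : ℂ)‖ ^ 2)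
    (hup : ∀ f : H, (∑' j : ℕ, ‖(inner ℂ (ψ j) f : ℂ)‖ ^ 2) ≤ B * ‖f‖ ^ 2)
    (S Sinv : H →L[ℂ] H)
    (hS : ∀ f : H, HasSum (fun j : ℕ => (inner ℂ (ψ j) f : ℂ) • ψ j) (S f))
    (hSinv₁ : ∀ f, Sinv (S f) = f) (hSinv₂ : ∀ f, S (Sinv f) = f)
    (c₀ c s : ℝ) (hc₀ : 0 < c₀) (hc : 0 < c) (hs : 1 < s)
    (hloc : ∀ j l : ℕ,
      ‖(inner ℂ (ψ j) (ψ l) : ℂ)‖ ≤ c₀ * (1 + |(j : ℝ) - (l : ℝ)|) ^ (-s))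
    (hdualloc : ∀ j l : ℕ,
      ‖(inner ℂ (Sinv (ψ j)) (Sinv (ψ l)) : ℂ)‖ ≤ c * (1 + |(j : ℝ) - (l : ℝ)|) ^ (-s))
    (f : H)
    (hdecay : ∀ j : ℕ, ‖(inner ℂ (ψ j) f : ℂ)‖ ≤ c * ((j : ℝ) + 1) ^ (-s))
    (P : ℕ → H → H)
    (hPmem : ∀ n g, P n g ∈ Submodule.span ℂ (ψ '' {i | i < n}))
    (hPorth : ∀ n g, ∀ h ∈ Submodule.span ℂ (ψ '' {i | i < n}),
      (inner ℂ (g - P n g) h : ℂ) = 0) :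
    ∃ C : ℝ, 0 < C ∧ ∀ n : ℕ, 1 ≤ n →
      ‖f - P n f‖ ≤ C * (n : ℝ) ^ (-(s - 1 / 2)) :=
  stmt_6_general ψ B hB hsum hup S Sinv hS hSinv₁ hSinv₂ c s hc hs hdualloc f hdecay P hPmem hPorth
end

section
/- Let {ψ_j} be a frame for H with bounds A, B satisfying |⟨ψ_j, ψ_l⟩| ≤ c₀(1+|j-l|)^{-s} with s > 1/2. Let n < m, let H_n = span{ψ_1,…,ψ_n}, P_n the orthogonal projection onto H_n, and suppose the Gram matrix Ψ_n = [⟨ψ_j, ψ_l⟩]_{j,l=1}^n is positive definite with minimal eigenvalue λ_min(Ψ_n) > 0. Define A_{m,n} = c₀²/((2s−1)λ_min(Ψ_n)) · n·(m−n)^{−(2s−1)}. If A_{m,n} < A, then for every g ∈ H_n, Σ_{j=1}^m |⟨g, P_n ψ_j⟩|² ≥ (A − A_{m,n})‖g‖² and Σ_{j=1}^m |⟨g, P_n ψ_j⟩|² ≤ B‖g‖²; that is, {P_n ψ_j}_{j=1}^m is a frame for H_n with bounds A − A_{m,n} and B. -/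
/-!
For `g = ∑_{i<n} a_i ψ_i` in `H_n`, orthogonality of `P` gives `⟨P ψ_j, g⟩ = ⟨ψ_j, g⟩`, so the
upper bound is the frame upper bound truncated at `m`. For the lower bound split the frame sum
at `m`. By Cauchy–Schwarz and localization, the term `j ≥ m` of the tail is at most
`‖a‖² n c₀² (j - n + 1)^(-2s)`; comparing with `∫ y^(-2s)` bounds the tail by
`‖a‖² n c₀² (m - n)^(-(2s-1)) / (2s-1)`, and the Gram bound gives `‖a‖² ≤ ‖g‖² / λ`.
-/

open Finset

lemma sum_range_rpow_neg_succ_le {p x : ℝ} (hp : 0 < p) (hx : 0 < x) (N : ℕ) :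
    ∑ k ∈ range N, (x + ↑(k + 1)) ^ (-(p + 1)) ≤ x ^ (-p) / p := by
  have hanti : AntitoneOn (fun y : ℝ => y ^ (-(p + 1))) (Set.Icc x (x + N)) :=
    fun y hy z _ hyz => Real.rpow_le_rpow_of_nonpos (hx.trans_le hy.1) hyz (by linarith)
  have hzero : (0 : ℝ) ∉ Set.uIcc x (x + N) := by
    rw [Set.uIcc_of_le (by simp)]
    exact fun h => hx.not_ge h.1
  calc ∑ k ∈ range N, (x + ↑(k + 1)) ^ (-(p + 1))
      ≤ ∫ y in x..x + N, y ^ (-(p + 1)) := hanti.sum_le_integral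
    _ = (x ^ (-p) - (x + N) ^ (-p)) / p := by
      rw [integral_rpow (Or.inr ⟨by linarith, hzero⟩), show -(p + 1) + 1 = -p by ring, div_neg,
        ← neg_div, neg_sub]
    _ ≤ x ^ (-p) / p := by
      gcongr
      exact sub_le_self _ (Real.rpow_nonneg (by positivity) _)

lemma norm_inner_sum_smul_sq_le {𝕜 E ι : Type*} [RCLike 𝕜] [SeminormedAddCommGroup E]
    [InnerProductSpace 𝕜 E] [Fintype ι] (f : E) (a : ι → 𝕜) (v : ι → E) :
    ‖(inner 𝕜 f (∑ i, a i • v i) : 𝕜)‖ ^ 2 ≤ (∑ i, ‖a i‖ ^ 2) * ∑ i, ‖(inner 𝕜 f (v i) : 𝕜)‖ ^ 2 :=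
  calc ‖(inner 𝕜 f (∑ i, a i • v i) : 𝕜)‖ ^ 2
      ≤ (∑ i, ‖a i‖ * ‖(inner 𝕜 f (v i) : 𝕜)‖) ^ 2 := by
        gcongr
        simpa only [inner_sum, inner_smul_right, norm_mul] using
          norm_sum_le univ fun i => a i * (inner 𝕜 f (v i) : 𝕜)
    _ ≤ (∑ i, ‖a i‖ ^ 2) * ∑ i, ‖(inner 𝕜 f (v i) : 𝕜)‖ ^ 2 := sum_mul_sq_le_sq_mul_sq _ _ _

section Localized

variable {H : Type*} [NormedAddCommGroup H] [InnerProductSpace ℂ H] {ψ : ℕ → H} {c₀ s : ℝ}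

lemma norm_inner_sq_le_of_lt_of_le (hs : 0 ≤ s) (hc₀ : 0 ≤ c₀)
    (hloc : ∀ j l : ℕ, ‖(inner ℂ (ψ j) (ψ l) : ℂ)‖ ≤ c₀ * (1 + |(j : ℝ) - (l : ℝ)|) ^ (-s))
    {i n j : ℕ} (hi : i < n) (hj : n ≤ j) :
    ‖(inner ℂ (ψ j) (ψ i) : ℂ)‖ ^ 2 ≤ c₀ ^ 2 * ((j : ℝ) - n + 1) ^ (-(2 * s)) := by
  have hi' : (i : ℝ) + 1 ≤ n := by exact_mod_cast hi
  have hj' : (n : ℝ) ≤ j := by exact_mod_cast hj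
  have hpos : 0 < (j : ℝ) - n + 1 := by linarith
  have hdist : (j : ℝ) - n + 1 ≤ 1 + |(j : ℝ) - i| := by
    rw [abs_of_nonneg (by linarith)]
    linarith
  calc ‖(inner ℂ (ψ j) (ψ i) : ℂ)‖ ^ 2
      ≤ (c₀ * ((j : ℝ) - n + 1) ^ (-s)) ^ 2 := by
        gcongr
        exact (hloc j i).trans
          (mul_le_mul_of_nonneg_left (Real.rpow_le_rpow_of_nonpos hpos hdist (by linarith)) hc₀)
    _ = c₀ ^ 2 * ((j : ℝ) - n + 1) ^ (-(2 * s)) := by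
        rw [mul_pow, ← Real.rpow_mul_natCast hpos.le]
        ring_nf

lemma tsum_norm_inner_add_sq_le (hs : 1 / 2 < s) (hc₀ : 0 ≤ c₀)
    (hloc : ∀ j l : ℕ, ‖(inner ℂ (ψ j) (ψ l) : ℂ)‖ ≤ c₀ * (1 + |(j : ℝ) - (l : ℝ)|) ^ (-s))
    {n m : ℕ} (hnm : n < m) (a : Fin n → ℂ) :
    ∑' k, ‖(inner ℂ (ψ (k + m)) (∑ i : Fin n, a i • ψ i) : ℂ)‖ ^ 2
      ≤ (∑ i, ‖a i‖ ^ 2) * (c₀ ^ 2 / (2 * s - 1) * n * ((m : ℝ) - n) ^ (-(2 * s - 1))) := by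
  set S := ∑ i, ‖a i‖ ^ 2
  have hmn : (0 : ℝ) < m - n := sub_pos.2 (by exact_mod_cast hnm)
  have hterm (k : ℕ) : ‖(inner ℂ (ψ (k + m)) (∑ i : Fin n, a i • ψ i) : ℂ)‖ ^ 2
      ≤ S * (n * c₀ ^ 2) * ((m - n : ℝ) + ↑(k + 1)) ^ (-((2 * s - 1) + 1)) := by
    have hdist : ((k + m : ℕ) : ℝ) - n + 1 = (m - n : ℝ) + ↑(k + 1) := by push_cast; ring
    calc _ ≤ S * ∑ i : Fin n, ‖(inner ℂ (ψ (k + m)) (ψ i) : ℂ)‖ ^ 2 :=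
          norm_inner_sum_smul_sq_le _ _ _
      _ ≤ S * ∑ _i : Fin n, c₀ ^ 2 * ((m - n : ℝ) + ↑(k + 1)) ^ (-((2 * s - 1) + 1)) := by
          gcongr with i
          rw [← hdist, sub_add_cancel]
          exact norm_inner_sq_le_of_lt_of_le (by linarith) hc₀ hloc i.2 (by omega)
      _ = S * (n * c₀ ^ 2) * ((m - n : ℝ) + ↑(k + 1)) ^ (-((2 * s - 1) + 1)) := by
          simp only [sum_const, card_univ, Fintype.card_fin, nsmul_eq_mul]
          ring
  refine Real.tsum_le_of_sum_range_le (fun _ => sq_nonneg _) fun N => ?_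
  calc _ ≤ ∑ k ∈ range N, S * (n * c₀ ^ 2) * ((m - n : ℝ) + ↑(k + 1)) ^ (-((2 * s - 1) + 1)) :=
        sum_le_sum fun k _ => hterm k
    _ ≤ S * (n * c₀ ^ 2) * (((m : ℝ) - n) ^ (-(2 * s - 1)) / (2 * s - 1)) := by
        rw [← mul_sum]
        gcongr
        exact sum_range_rpow_neg_succ_le (by linarith) hmn N
    _ = S * (c₀ ^ 2 / (2 * s - 1) * n * ((m : ℝ) - n) ^ (-(2 * s - 1))) := by ring

end Localized

theorem stmt_7_general {H : Type*} [NormedAddCommGroup H] [InnerProductSpace ℂ H]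
    (ψ : ℕ → H) (A B : ℝ)
    (hsum : ∀ f : H, Summable fun j : ℕ => ‖(inner ℂ (ψ j) f : ℂ)‖ ^ 2)
    (hlow : ∀ f : H, A * ‖f‖ ^ 2 ≤ ∑' j : ℕ, ‖(inner ℂ (ψ j) f : ℂ)‖ ^ 2)
    (hup : ∀ f : H, (∑' j : ℕ, ‖(inner ℂ (ψ j) f : ℂ)‖ ^ 2) ≤ B * ‖f‖ ^ 2)
    (c₀ s : ℝ) (hc₀ : 0 < c₀) (hs : 1 / 2 < s)
    (hloc : ∀ j l : ℕ,
      ‖(inner ℂ (ψ j) (ψ l) : ℂ)‖ ≤ c₀ * (1 + |(j : ℝ) - (l : ℝ)|) ^ (-s))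
    (n m : ℕ) (hnm : n < m)
    (lam : ℝ) (hlam : 0 < lam)
    (hGram : ∀ a : Fin n → ℂ,
      lam * ∑ i, ‖a i‖ ^ 2 ≤ ‖∑ i : Fin n, a i • ψ (i : ℕ)‖ ^ 2)
    (P : H → H)
    (hPorth : ∀ g, ∀ h ∈ Submodule.span ℂ (ψ '' {i | i < n}),
      (inner ℂ (g - P g) h : ℂ) = 0) :
    ∀ g ∈ Submodule.span ℂ (ψ '' {i | i < n}),
      (A - c₀ ^ 2 / ((2 * s - 1) * lam) * (n : ℝ)
          * ((m : ℝ) - (n : ℝ)) ^ (-(2 * s - 1))) * ‖g‖ ^ 2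
        ≤ ∑ j ∈ Finset.range m, ‖(inner ℂ (P (ψ j)) g : ℂ)‖ ^ 2
      ∧ (∑ j ∈ Finset.range m, ‖(inner ℂ (P (ψ j)) g : ℂ)‖ ^ 2) ≤ B * ‖g‖ ^ 2 := by
  intro g hg
  have hP (j : ℕ) : (inner ℂ (P (ψ j)) g : ℂ) = inner ℂ (ψ j) g := by
    simpa [inner_sub_left, sub_eq_zero, eq_comm] using hPorth (ψ j) g hg
  simp only [hP]
  refine ⟨?_, ((hsum g).sum_le_tsum _ fun j _ => sq_nonneg _).trans (hup g)⟩
  rw [show {i | i < n} = Set.Iio n from rfl, ← Fin.range_val, ← Set.range_comp'] at hg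
  obtain ⟨a, rfl⟩ := (Submodule.mem_span_range_iff_exists_fun ℂ).mp hg
  set g := ∑ i : Fin n, a i • ψ i
  have hcoeff : ∑ i, ‖a i‖ ^ 2 ≤ ‖g‖ ^ 2 / lam := (le_div_iff₀' hlam).2 (hGram a)
  have htail : ∑' k, ‖(inner ℂ (ψ (k + m)) g : ℂ)‖ ^ 2
      ≤ c₀ ^ 2 / ((2 * s - 1) * lam) * n * ((m : ℝ) - n) ^ (-(2 * s - 1)) * ‖g‖ ^ 2 :=
    calc _ ≤ (∑ i, ‖a i‖ ^ 2) * (c₀ ^ 2 / (2 * s - 1) * n * ((m : ℝ) - n) ^ (-(2 * s - 1))) :=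
          tsum_norm_inner_add_sq_le hs hc₀.le hloc hnm a
      _ ≤ ‖g‖ ^ 2 / lam * (c₀ ^ 2 / (2 * s - 1) * n * ((m : ℝ) - n) ^ (-(2 * s - 1))) := by
          have hp : 0 < 2 * s - 1 := by linarith
          have hmn : (0 : ℝ) < m - n := sub_pos.2 (by exact_mod_cast hnm)
          gcongr
      _ = _ := by rw [← div_div]; ring
  have hsplit := (hsum g).sum_add_tsum_nat_add m
  linarith [hlow g]

/-- Lemma 3.3: if the frame `{ψ_j}` with bounds `A, B` is intrinsically
localized with rate `s > 1/2`, `n < m`, and the Gram matrix of `ψ_1,…,ψ_n` has smallest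
eigenvalue `lam > 0` (encoded by the quadratic-form bound `hGram`), and
`A_{m,n} = c₀²/((2s-1) lam) · n (m-n)^{-(2s-1)} < A`, then `{P_n ψ_j}_{j=1}^m` is a frame
for `H_n = span{ψ_1,…,ψ_n}` with bounds `A - A_{m,n}` and `B`.
(Indices shifted by one: `ψ j` represents `ψ_{j+1}`.) -/
theorem stmt_7 {H : Type*} [NormedAddCommGroup H] [InnerProductSpace ℂ H]
    [CompleteSpace H] [TopologicalSpace.SeparableSpace H]
    (ψ : ℕ → H) (A B : ℝ) (hA : 0 < A) (hB : 0 < B)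
    (hsum : ∀ f : H, Summable fun j : ℕ => ‖(inner ℂ (ψ j) f : ℂ)‖ ^ 2)
    (hlow : ∀ f : H, A * ‖f‖ ^ 2 ≤ ∑' j : ℕ, ‖(inner ℂ (ψ j) f : ℂ)‖ ^ 2)
    (hup : ∀ f : H, (∑' j : ℕ, ‖(inner ℂ (ψ j) f : ℂ)‖ ^ 2) ≤ B * ‖f‖ ^ 2)
    (c₀ s : ℝ) (hc₀ : 0 < c₀) (hs : 1 / 2 < s)
    (hloc : ∀ j l : ℕ,
      ‖(inner ℂ (ψ j) (ψ l) : ℂ)‖ ≤ c₀ * (1 + |(j : ℝ) - (l : ℝ)|) ^ (-s))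
    (n m : ℕ) (hn : 1 ≤ n) (hnm : n < m)
    (lam : ℝ) (hlam : 0 < lam)
    (hGram : ∀ a : Fin n → ℂ,
      lam * ∑ i, ‖a i‖ ^ 2 ≤ ‖∑ i : Fin n, a i • ψ (i : ℕ)‖ ^ 2)
    (P : H → H)
    (hPmem : ∀ g, P g ∈ Submodule.span ℂ (ψ '' {i | i < n}))
    (hPorth : ∀ g, ∀ h ∈ Submodule.span ℂ (ψ '' {i | i < n}),
      (inner ℂ (g - P g) h : ℂ) = 0)
    (hAmn : c₀ ^ 2 / ((2 * s - 1) * lam) * (n : ℝ) * ((m : ℝ) - (n : ℝ)) ^ (-(2 * s - 1))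
      < A) :
    ∀ g ∈ Submodule.span ℂ (ψ '' {i | i < n}),
      (A - c₀ ^ 2 / ((2 * s - 1) * lam) * (n : ℝ)
          * ((m : ℝ) - (n : ℝ)) ^ (-(2 * s - 1))) * ‖g‖ ^ 2
        ≤ ∑ j ∈ Finset.range m, ‖(inner ℂ (P (ψ j)) g : ℂ)‖ ^ 2
      ∧ (∑ j ∈ Finset.range m, ‖(inner ℂ (P (ψ j)) g : ℂ)‖ ^ 2) ≤ B * ‖g‖ ^ 2 :=
  stmt_7_general ψ A B hsum hlow hup c₀ s hc₀ hs hloc n m hnm lam hlam hGram P hPorth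
end

section
/- With the same setup as Lemma 4.1, if B_{m,n} < A then {Q_n ψ_j}_{j=1}^m is a frame for G_n with bounds A − B_{m,n} and B, with frame operator W_n, and ‖W_n^{-1}‖ ≤ 1/(A − B_{m,n}). -/
/-!
For `g ∈ G_n` one has `⟪Q ψ_j, g⟫ = ⟪ψ_j, g⟫`, so the frame sums of `{Q ψ_j}` on `G_n` are the
truncated frame sums of `{ψ_j}`. Writing `g = ∑ a_l φ_l`, Cauchy–Schwarz together with the lower
Riesz bound `λ ∑ |a_l|² ≤ ‖g‖²` bounds the tail `∑_{j ≥ m} |⟪ψ_j, g⟫|²` by `B_{m,n} ‖g‖²`, which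
yields the lower frame bound `A - B_{m,n}`. Then `⟪W_n g, g⟫ = ∑_{j < m} |⟪ψ_j, g⟫|²` shows that
`W_n` is bounded below by `A - B_{m,n}`; in particular it is injective, hence bijective on the
finite-dimensional space `G_n`.
-/

open Finset
open scoped InnerProductSpace

section

variable {𝕜 E : Type*} [RCLike 𝕜] [NormedAddCommGroup E] [InnerProductSpace 𝕜 E]

theorem norm_inner_sum_smul_sq_le_s10 {ι : Type*} (s : Finset ι) (v : E) (a : ι → 𝕜) (φ : ι → E) :
    ‖⟪v, ∑ i ∈ s, a i • φ i⟫_𝕜‖ ^ 2 ≤ (∑ i ∈ s, ‖a i‖ ^ 2) * ∑ i ∈ s, ‖⟪v, φ i⟫_𝕜‖ ^ 2 := by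
  have h : ‖⟪v, ∑ i ∈ s, a i • φ i⟫_𝕜‖ ≤ ∑ i ∈ s, ‖a i‖ * ‖⟪v, φ i⟫_𝕜‖ := by
    simpa [inner_sum, inner_smul_right] using norm_sum_le s fun i => a i * ⟪v, φ i⟫_𝕜
  calc _ ≤ (∑ i ∈ s, ‖a i‖ * ‖⟪v, φ i⟫_𝕜‖) ^ 2 := pow_le_pow_left₀ (norm_nonneg _) h 2
    _ ≤ _ := sum_mul_sq_le_sq_mul_sq s _ _

theorem tsum_norm_inner_sq_le_of_lower_riesz_bound {ι β : Type*} [Fintype ι] (χ : β → E)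
    {φ : ι → E} {lam : ℝ} (hlam : 0 < lam)
    (hφ : ∀ a : ι → 𝕜, lam * ∑ i, ‖a i‖ ^ 2 ≤ ‖∑ i, a i • φ i‖ ^ 2)
    (hχφ : Summable fun j => ∑ l, ‖⟪χ j, φ l⟫_𝕜‖ ^ 2) {g : E}
    (hg : g ∈ Submodule.span 𝕜 (Set.range φ)) :
    ∑' j, ‖⟪χ j, g⟫_𝕜‖ ^ 2 ≤ (1 / lam) * (∑' j, ∑ l, ‖⟪χ j, φ l⟫_𝕜‖ ^ 2) * ‖g‖ ^ 2 := by
  obtain ⟨a, rfl⟩ := (Submodule.mem_span_range_iff_exists_fun 𝕜).mp hg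
  have hcoef : ∑ i, ‖a i‖ ^ 2 ≤ (1 / lam) * ‖∑ i, a i • φ i‖ ^ 2 := by
    rw [one_div_mul_eq_div, le_div_iff₀ hlam, mul_comm]
    exact hφ a
  have hterm : ∀ j, ‖⟪χ j, ∑ i, a i • φ i⟫_𝕜‖ ^ 2
      ≤ (∑ i, ‖a i‖ ^ 2) * ∑ l, ‖⟪χ j, φ l⟫_𝕜‖ ^ 2 :=
    fun j => norm_inner_sum_smul_sq_le_s10 _ _ _ _
  have hdom := hχφ.mul_left (∑ i, ‖a i‖ ^ 2)
  calc ∑' j, ‖⟪χ j, ∑ i, a i • φ i⟫_𝕜‖ ^ 2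
      ≤ ∑' j, (∑ i, ‖a i‖ ^ 2) * ∑ l, ‖⟪χ j, φ l⟫_𝕜‖ ^ 2 :=
        (hdom.of_nonneg_of_le (fun j => by positivity) hterm).tsum_le_tsum hterm hdom
    _ = (∑ i, ‖a i‖ ^ 2) * ∑' j, ∑ l, ‖⟪χ j, φ l⟫_𝕜‖ ^ 2 := tsum_mul_left
    _ ≤ _ := by
      rw [mul_right_comm]
      exact mul_le_mul_of_nonneg_right hcoef (tsum_nonneg fun j => by positivity)

theorem inner_sum_inner_smul_self {ι : Type*} (s : Finset ι) (ψ : ι → E) (g : E) :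
    ⟪∑ j ∈ s, ⟪ψ j, g⟫_𝕜 • ψ j, g⟫_𝕜 = ((∑ j ∈ s, ‖⟪ψ j, g⟫_𝕜‖ ^ 2 : ℝ) : 𝕜) := by
  simp only [sum_inner, inner_smul_left, RCLike.conj_mul, RCLike.ofReal_sum, RCLike.ofReal_pow]

theorem mul_norm_le_norm_of_mul_sq_le_re_inner {c : ℝ} {w g : E}
    (h : c * ‖g‖ ^ 2 ≤ RCLike.re ⟪w, g⟫_𝕜) : c * ‖g‖ ≤ ‖w‖ := by
  rcases eq_or_ne g 0 with rfl | hg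
  · simp
  have : c * ‖g‖ * ‖g‖ ≤ ‖w‖ * ‖g‖ := by
    nlinarith [re_inner_le_norm (𝕜 := 𝕜) w g]
  exact le_of_mul_le_mul_right this (norm_pos_iff.mpr hg)

theorem Submodule.existsUnique_mem_apply_eq_of_le_norm_apply (K : Submodule 𝕜 E)
    [FiniteDimensional 𝕜 K] (T : E →ₗ[𝕜] E) (hTK : ∀ g ∈ K, T g ∈ K) {c : ℝ} (hc : 0 < c)
    (hT : ∀ g ∈ K, c * ‖g‖ ≤ ‖T g‖) {h : E} (hh : h ∈ K) : ∃! g, g ∈ K ∧ T g = h := by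
  let T' : K →ₗ[𝕜] K := T.restrict hTK
  have hinj : Function.Injective T' := by
    refine (injective_iff_map_eq_zero T').mpr fun x hx => ?_
    have hx' : T x = 0 := congrArg Subtype.val hx
    have := hT x x.2
    rw [hx', norm_zero] at this
    exact Subtype.ext (norm_le_zero_iff.mp (nonpos_of_mul_nonpos_right this hc))
  obtain ⟨x, hx⟩ := LinearMap.injective_iff_surjective.mp hinj ⟨h, hh⟩
  refine ⟨x, ⟨x.2, congrArg Subtype.val hx⟩, fun g ⟨hg, hTg⟩ => ?_⟩
  have : T' ⟨g, hg⟩ = T' x := Subtype.ext (hTg.trans (congrArg Subtype.val hx).symm)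
  exact congrArg Subtype.val (hinj this)

theorem Submodule.inner_starProjection_eq_of_mem_right (K : Submodule 𝕜 E)
    [K.HasOrthogonalProjection] (u : E) {g : E} (hg : g ∈ K) :
    ⟪K.starProjection u, g⟫_𝕜 = ⟪u, g⟫_𝕜 := by
  rw [K.inner_starProjection_left_eq_right, K.starProjection_eq_self_iff.mpr hg]

theorem Submodule.mul_norm_le_norm_starProjection_sum_inner_smul (K : Submodule 𝕜 E)
    [K.HasOrthogonalProjection] {ι : Type*} (s : Finset ι) (ψ : ι → E) {c : ℝ} {g : E}
    (hg : g ∈ K) (hc : c * ‖g‖ ^ 2 ≤ ∑ j ∈ s, ‖⟪ψ j, g⟫_𝕜‖ ^ 2) :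
    c * ‖g‖ ≤ ‖K.starProjection (∑ j ∈ s, ⟪ψ j, g⟫_𝕜 • ψ j)‖ := by
  refine mul_norm_le_norm_of_mul_sq_le_re_inner (𝕜 := 𝕜) ?_
  rwa [K.inner_starProjection_eq_of_mem_right _ hg, inner_sum_inner_smul_self, RCLike.ofReal_re]

theorem Submodule.existsUnique_starProjection_sum_inner_smul_eq (K : Submodule 𝕜 E)
    [FiniteDimensional 𝕜 K] {ι : Type*} (s : Finset ι) (ψ : ι → E) {c : ℝ} (hc : 0 < c)
    (hK : ∀ g ∈ K, c * ‖g‖ ≤ ‖K.starProjection (∑ j ∈ s, ⟪ψ j, g⟫_𝕜 • ψ j)‖) {h : E}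
    (hh : h ∈ K) : ∃! g, g ∈ K ∧ K.starProjection (∑ j ∈ s, ⟪ψ j, g⟫_𝕜 • ψ j) = h := by
  let W : E →ₗ[𝕜] E :=
    K.starProjection.toLinearMap ∘ₗ ∑ j ∈ s, (innerₛₗ 𝕜 (ψ j)).smulRight (ψ j)
  have hW : ∀ g, W g = K.starProjection (∑ j ∈ s, ⟪ψ j, g⟫_𝕜 • ψ j) := fun g => by
    simp [W]
  simp only [← hW] at hK ⊢
  exact K.existsUnique_mem_apply_eq_of_le_norm_apply W
    (fun g _ => hW g ▸ K.starProjection_apply_mem _) hc hK hh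

theorem mul_norm_sq_le_sum_range_norm_inner_sq_of_mem_span {ι : Type*} [Fintype ι]
    (ψ : ℕ → E) {φ : ι → E} {A lam : ℝ} (hlam : 0 < lam)
    (hφ : ∀ a : ι → 𝕜, lam * ∑ i, ‖a i‖ ^ 2 ≤ ‖∑ i, a i • φ i‖ ^ 2) (m : ℕ)
    (hψφ : Summable fun j => ∑ l, ‖⟪ψ (m + j), φ l⟫_𝕜‖ ^ 2) {g : E}
    (hg : g ∈ Submodule.span 𝕜 (Set.range φ)) (hsum : Summable fun j => ‖⟪ψ j, g⟫_𝕜‖ ^ 2)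
    (hlow : A * ‖g‖ ^ 2 ≤ ∑' j, ‖⟪ψ j, g⟫_𝕜‖ ^ 2) :
    (A - (1 / lam) * ∑' j, ∑ l, ‖⟪ψ (m + j), φ l⟫_𝕜‖ ^ 2) * ‖g‖ ^ 2
      ≤ ∑ j ∈ range m, ‖⟪ψ j, g⟫_𝕜‖ ^ 2 := by
  have htail := tsum_norm_inner_sq_le_of_lower_riesz_bound _ hlam hφ hψφ hg
  have hsplit := hsum.sum_add_tsum_nat_add m
  simp only [add_comm _ m] at hsplit
  linarith

end

-- Indices are shifted by one (`ψ j` is the paper's `ψ_{j+1}`), and `lam` is any lower Riesz bound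
-- of `φ 0, …, φ (n-1)`, such as `λ_min(Φ_n)`.
theorem stmt_10_general {H : Type*} [NormedAddCommGroup H] [InnerProductSpace ℂ H]
    (ψ φ : ℕ → H) (A B : ℝ)
    (hsum : ∀ f : H, Summable fun j : ℕ => ‖(inner ℂ (ψ j) f : ℂ)‖ ^ 2)
    (hlow : ∀ f : H, A * ‖f‖ ^ 2 ≤ ∑' j : ℕ, ‖(inner ℂ (ψ j) f : ℂ)‖ ^ 2)
    (hup : ∀ f : H, (∑' j : ℕ, ‖(inner ℂ (ψ j) f : ℂ)‖ ^ 2) ≤ B * ‖f‖ ^ 2)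
    (n m : ℕ)
    (lam : ℝ) (hlam : 0 < lam)
    (hGram : ∀ a : Fin n → ℂ,
      lam * ∑ i, ‖a i‖ ^ 2 ≤ ‖∑ i : Fin n, a i • φ (i : ℕ)‖ ^ 2)
    (Q : H → H)
    (hQmem : ∀ g, Q g ∈ Submodule.span ℂ (φ '' {i | i < n}))
    (hQorth : ∀ g, ∀ h ∈ Submodule.span ℂ (φ '' {i | i < n}),
      (inner ℂ (g - Q g) h : ℂ) = 0)
    (hBsum : Summable fun j : ℕ => ∑ l ∈ Finset.range n,
      ‖(inner ℂ (ψ (m + j)) (φ l) : ℂ)‖ ^ 2)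
    (hBmn : ((1 / lam) * ∑' j : ℕ, ∑ l ∈ Finset.range n,
        ‖(inner ℂ (ψ (m + j)) (φ l) : ℂ)‖ ^ 2) < A) :
    (∀ g ∈ Submodule.span ℂ (φ '' {i | i < n}),
      (A - (1 / lam) * ∑' j : ℕ, ∑ l ∈ Finset.range n,
          ‖(inner ℂ (ψ (m + j)) (φ l) : ℂ)‖ ^ 2) * ‖g‖ ^ 2
        ≤ ∑ j ∈ Finset.range m, ‖(inner ℂ (Q (ψ j)) g : ℂ)‖ ^ 2
      ∧ (∑ j ∈ Finset.range m, ‖(inner ℂ (Q (ψ j)) g : ℂ)‖ ^ 2) ≤ B * ‖g‖ ^ 2)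
    ∧ (∀ g ∈ Submodule.span ℂ (φ '' {i | i < n}),
        (∑ j ∈ Finset.range m, (inner ℂ (Q (ψ j)) g : ℂ) • Q (ψ j))
          = Q (∑ j ∈ Finset.range m, (inner ℂ (ψ j) g : ℂ) • ψ j))
    ∧ (∀ h ∈ Submodule.span ℂ (φ '' {i | i < n}),
        ∃! g : H, g ∈ Submodule.span ℂ (φ '' {i | i < n}) ∧
          Q (∑ j ∈ Finset.range m, (inner ℂ (ψ j) g : ℂ) • ψ j) = h)
    ∧ (∀ g ∈ Submodule.span ℂ (φ '' {i | i < n}),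
        (A - (1 / lam) * ∑' j : ℕ, ∑ l ∈ Finset.range n,
            ‖(inner ℂ (ψ (m + j)) (φ l) : ℂ)‖ ^ 2) * ‖g‖
          ≤ ‖Q (∑ j ∈ Finset.range m, (inner ℂ (ψ j) g : ℂ) • ψ j)‖) := by
  set G := Submodule.span ℂ (φ '' {i | i < n})
  have hG : G = Submodule.span ℂ (Set.range fun i : Fin n => φ i) := by
    rw [← Function.comp_def, Set.range_comp, Fin.range_val]
    rfl
  have : FiniteDimensional ℂ G := hG ▸ FiniteDimensional.span_of_finite ℂ (Set.finite_range _)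
  obtain rfl : Q = G.starProjection := funext fun u =>
    (G.eq_starProjection_of_mem_of_inner_eq_zero (hQmem u) (hQorth u)).symm
  simp only [← Fin.sum_univ_eq_sum_range (fun l => ‖⟪ψ (m + _), φ l⟫_ℂ‖ ^ 2)] at hBsum hBmn ⊢
  set Bmn := (1 / lam) * ∑' j, ∑ l : Fin n, ‖⟪ψ (m + j), φ l⟫_ℂ‖ ^ 2
  have hlower : ∀ g ∈ G, (A - Bmn) * ‖g‖ ^ 2 ≤ ∑ j ∈ range m, ‖⟪ψ j, g⟫_ℂ‖ ^ 2 := fun g hg =>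
    mul_norm_sq_le_sum_range_norm_inner_sq_of_mem_span ψ hlam hGram m hBsum (hG ▸ hg)
      (hsum g) (hlow g)
  have hnorm : ∀ g ∈ G, (A - Bmn) * ‖g‖ ≤ ‖G.starProjection (∑ j ∈ range m, ⟪ψ j, g⟫_ℂ • ψ j)‖ :=
    fun g hg => G.mul_norm_le_norm_starProjection_sum_inner_smul _ ψ hg (hlower g hg)
  refine ⟨fun g hg => ?_, fun g hg => ?_,
    fun h hh => G.existsUnique_starProjection_sum_inner_smul_eq _ ψ (sub_pos.mpr hBmn) hnorm hh,
    hnorm⟩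
  · simp only [G.inner_starProjection_eq_of_mem_right _ hg]
    exact ⟨hlower g hg, ((hsum g).sum_le_tsum _ fun j _ => by positivity).trans (hup g)⟩
  · simp only [map_sum, map_smul, G.inner_starProjection_eq_of_mem_right _ hg]

/-- Lemma 4.2: if `B_{m,n} < A` then `{Q_n ψ_j}_{j=1}^m` is a frame for
`G_n = span{φ_1,…,φ_n}` with bounds `A - B_{m,n}`, `B`, with frame operator
`W_n = Q_n S_m |_{G_n}`, which is invertible on `G_n` with `‖W_n⁻¹‖ ≤ 1/(A - B_{m,n})`.
(Indices shifted by one: `ψ j`, `φ j` represent `ψ_{j+1}`, `φ_{j+1}`.) -/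
theorem stmt_10 {H : Type*} [NormedAddCommGroup H] [InnerProductSpace ℂ H]
    [CompleteSpace H] [TopologicalSpace.SeparableSpace H]
    (ψ φ : ℕ → H) (A B : ℝ) (hA : 0 < A) (hB : 0 < B)
    (hsum : ∀ f : H, Summable fun j : ℕ => ‖(inner ℂ (ψ j) f : ℂ)‖ ^ 2)
    (hlow : ∀ f : H, A * ‖f‖ ^ 2 ≤ ∑' j : ℕ, ‖(inner ℂ (ψ j) f : ℂ)‖ ^ 2)
    (hup : ∀ f : H, (∑' j : ℕ, ‖(inner ℂ (ψ j) f : ℂ)‖ ^ 2) ≤ B * ‖f‖ ^ 2)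
    (n m : ℕ) (hnm : n < m)
    (lam : ℝ) (hlam : 0 < lam)
    (hGram : ∀ a : Fin n → ℂ,
      lam * ∑ i, ‖a i‖ ^ 2 ≤ ‖∑ i : Fin n, a i • φ (i : ℕ)‖ ^ 2)
    (Q : H → H)
    (hQmem : ∀ g, Q g ∈ Submodule.span ℂ (φ '' {i | i < n}))
    (hQorth : ∀ g, ∀ h ∈ Submodule.span ℂ (φ '' {i | i < n}),
      (inner ℂ (g - Q g) h : ℂ) = 0)
    (hBsum : Summable fun j : ℕ => ∑ l ∈ Finset.range n,
      ‖(inner ℂ (ψ (m + j)) (φ l) : ℂ)‖ ^ 2)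
    (hBmn : ((1 / lam) * ∑' j : ℕ, ∑ l ∈ Finset.range n,
        ‖(inner ℂ (ψ (m + j)) (φ l) : ℂ)‖ ^ 2) < A) :
    (∀ g ∈ Submodule.span ℂ (φ '' {i | i < n}),
      (A - (1 / lam) * ∑' j : ℕ, ∑ l ∈ Finset.range n,
          ‖(inner ℂ (ψ (m + j)) (φ l) : ℂ)‖ ^ 2) * ‖g‖ ^ 2
        ≤ ∑ j ∈ Finset.range m, ‖(inner ℂ (Q (ψ j)) g : ℂ)‖ ^ 2
      ∧ (∑ j ∈ Finset.range m, ‖(inner ℂ (Q (ψ j)) g : ℂ)‖ ^ 2) ≤ B * ‖g‖ ^ 2)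
    ∧ (∀ g ∈ Submodule.span ℂ (φ '' {i | i < n}),
        (∑ j ∈ Finset.range m, (inner ℂ (Q (ψ j)) g : ℂ) • Q (ψ j))
          = Q (∑ j ∈ Finset.range m, (inner ℂ (ψ j) g : ℂ) • ψ j))
    ∧ (∀ h ∈ Submodule.span ℂ (φ '' {i | i < n}),
        ∃! g : H, g ∈ Submodule.span ℂ (φ '' {i | i < n}) ∧
          Q (∑ j ∈ Finset.range m, (inner ℂ (ψ j) g : ℂ) • ψ j) = h)
    ∧ (∀ g ∈ Submodule.span ℂ (φ '' {i | i < n}),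
        (A - (1 / lam) * ∑' j : ℕ, ∑ l ∈ Finset.range n,
            ‖(inner ℂ (ψ (m + j)) (φ l) : ℂ)‖ ^ 2) * ‖g‖
          ≤ ‖Q (∑ j ∈ Finset.range m, (inner ℂ (ψ j) g : ℂ) • ψ j)‖) :=
  stmt_10_general ψ φ A B hsum hlow hup n m lam hlam hGram Q hQmem hQorth hBsum hBmn
end

section
/- If |⟨φ_l, ψ_j⟩| ≤ c₁(1+|j−l|)^{-s} for all j, l with s > 1/2, and m > n, then B_{m,n} = (1/λ_min(Φ_n)) Σ_{j=m+1}^∞ Σ_{l=1}^n |⟨φ_l, ψ_j⟩|² ≤ (c₁²/(2s−1)) · (1/λ_min(Φ_n)) · n · (m−n)^{−(2s−1)}. -/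
/-!
Each term of the tail satisfies `|⟨ψ_{m+j}, φ_l⟩|² ≤ c₁² (m - n + 1 + j)^{-2s}` for `l < n`, since
`|m + j - l| ≥ m - n + 1 + j`. Summing over the `n` indices `l` and comparing the sum over `j` with
`∫_{m-n}^∞ x^{-2s} dx = (m-n)^{1-2s}/(2s-1)` gives the bound.
-/

open MeasureTheory Set

lemma sum_range_rpow_neg_le_integral {q b : ℝ} (hq : 1 < q) (hb : 0 < b) (k : ℕ) :
    ∑ j ∈ Finset.range k, (b + 1 + j) ^ (-q) ≤ b ^ (1 - q) / (q - 1) := by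
  have hexp : -q < -1 := by linarith
  have hanti : AntitoneOn (fun x : ℝ => x ^ (-q)) (Icc b (b + k)) := fun x hx y _ hxy =>
    Real.rpow_le_rpow_of_nonpos (hb.trans_le hx.1) hxy (by linarith)
  have hint : IntegrableOn (fun x : ℝ => x ^ (-q)) (Ioi b) := integrableOn_Ioi_rpow_of_lt hexp hb
  calc ∑ j ∈ Finset.range k, (b + 1 + j) ^ (-q)
      = ∑ j ∈ Finset.range k, (b + ((j + 1 : ℕ) : ℝ)) ^ (-q) := by push_cast; ring_nf
    _ ≤ ∫ x in b..b + k, x ^ (-q) := hanti.sum_le_integral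
    _ ≤ ∫ x in Ioi b, x ^ (-q) := by
      rw [intervalIntegral.integral_of_le (le_add_of_nonneg_right k.cast_nonneg)]
      refine setIntegral_mono_set hint ?_ (.of_forall fun x hx => hx.1)
      filter_upwards [ae_restrict_mem measurableSet_Ioi] with x hx
      exact Real.rpow_nonneg (hb.trans hx).le _
    _ = b ^ (1 - q) / (q - 1) := by
      rw [integral_Ioi_rpow_of_lt hexp hb, neg_add_eq_sub, ← neg_sub q 1, div_neg, neg_div,
        neg_neg]

lemma sq_le_of_le_mul_rpow_neg {x c s t u : ℝ} (hx : 0 ≤ x) (hs : 0 ≤ s) (hu : 0 < u)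
    (hut : u ≤ t) (h : x ≤ c * t ^ (-s)) : x ^ 2 ≤ c ^ 2 * u ^ (-(2 * s)) := by
  have ht : 0 < t := hu.trans_le hut
  calc x ^ 2 ≤ (c * t ^ (-s)) ^ 2 := pow_le_pow_left₀ hx h 2
    _ = c ^ 2 * t ^ (-(2 * s)) := by
      rw [mul_pow, ← Real.rpow_natCast (t ^ (-s)) 2, ← Real.rpow_mul ht.le]
      ring_nf
    _ ≤ c ^ 2 * u ^ (-(2 * s)) := by
      have := Real.rpow_le_rpow_of_nonpos hu hut (by linarith : -(2 * s) ≤ 0)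
      gcongr

theorem tsum_sum_range_norm_sq_le_of_decay {E : Type*} [SeminormedAddGroup E]
    (a : ℕ → ℕ → E) {c s : ℝ} (hs : 1 / 2 < s)
    (ha : ∀ j l : ℕ, ‖a j l‖ ≤ c * (1 + |(j : ℝ) - l|) ^ (-s)) {n m : ℕ} (hnm : n < m) :
    ∑' j : ℕ, ∑ l ∈ Finset.range n, ‖a (m + j) l‖ ^ 2
      ≤ c ^ 2 / (2 * s - 1) * n * ((m : ℝ) - n) ^ (-(2 * s - 1)) := by
  have hgap : 0 < (m : ℝ) - n := sub_pos.mpr (by exact_mod_cast hnm)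
  have hterm : ∀ j, ∀ l ∈ Finset.range n,
      ‖a (m + j) l‖ ^ 2 ≤ c ^ 2 * ((m - n : ℝ) + 1 + j) ^ (-(2 * s)) := by
    intro j l hl
    have hln : (l : ℝ) + 1 ≤ n := by exact_mod_cast Finset.mem_range.mp hl
    refine sq_le_of_le_mul_rpow_neg (norm_nonneg _) (by linarith) (by positivity) ?_ (ha _ _)
    push_cast
    linarith [le_abs_self ((m : ℝ) + j - l)]
  refine Real.tsum_le_of_sum_range_le (fun j => by positivity) fun k => ?_
  calc ∑ j ∈ Finset.range k, ∑ l ∈ Finset.range n, ‖a (m + j) l‖ ^ 2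
      ≤ ∑ j ∈ Finset.range k, n * (c ^ 2 * ((m - n : ℝ) + 1 + j) ^ (-(2 * s))) := by
        gcongr with j
        simpa using Finset.sum_le_sum (hterm j)
    _ = c ^ 2 * n * ∑ j ∈ Finset.range k, ((m - n : ℝ) + 1 + j) ^ (-(2 * s)) := by
        rw [Finset.mul_sum]
        exact Finset.sum_congr rfl fun j _ => by ring
    _ ≤ c ^ 2 * n * (((m : ℝ) - n) ^ (1 - 2 * s) / (2 * s - 1)) := by
        gcongr
        exact sum_range_rpow_neg_le_integral (by linarith) hgap k
    _ = c ^ 2 / (2 * s - 1) * n * ((m : ℝ) - n) ^ (-(2 * s - 1)) := by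
        rw [neg_sub]
        ring

theorem stmt_11_general {H : Type*} [NormedAddCommGroup H] [InnerProductSpace ℂ H]
    (ψ φ : ℕ → H) (c₁ s : ℝ) (hs : 1 / 2 < s)
    (hcross : ∀ j l : ℕ,
      ‖(inner ℂ (ψ j) (φ l) : ℂ)‖ ≤ c₁ * (1 + |(j : ℝ) - (l : ℝ)|) ^ (-s))
    (n m : ℕ) (hnm : n < m)
    (lam : ℝ) (hlam : 0 < lam) :
    ((1 / lam) * ∑' j : ℕ, ∑ l ∈ Finset.range n,
        ‖(inner ℂ (ψ (m + j)) (φ l) : ℂ)‖ ^ 2)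
      ≤ (c₁ ^ 2 / (2 * s - 1)) * (1 / lam) * (n : ℝ)
          * ((m : ℝ) - (n : ℝ)) ^ (-(2 * s - 1)) := by
  have htail := tsum_sum_range_norm_sq_le_of_decay (fun j l => inner ℂ (ψ j) (φ l)) hs hcross hnm
  calc (1 / lam) * ∑' j : ℕ, ∑ l ∈ Finset.range n, ‖(inner ℂ (ψ (m + j)) (φ l) : ℂ)‖ ^ 2
      ≤ (1 / lam) * (c₁ ^ 2 / (2 * s - 1) * n * ((m : ℝ) - n) ^ (-(2 * s - 1))) := by
        gcongr
    _ = _ := by ring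

/-- Lemma 4.3: if `|⟨φ_l, ψ_j⟩| ≤ c₁ (1+|j-l|)^{-s}` with `s > 1/2` and
`m > n`, then `B_{m,n} = (1/λ_min) ∑_{j=m+1}^∞ ∑_{l=1}^n |⟨φ_l, ψ_j⟩|²
≤ (c₁²/(2s-1)) (1/λ_min) n (m-n)^{-(2s-1)}`. (Indices shifted by one.) -/
theorem stmt_11 {H : Type*} [NormedAddCommGroup H] [InnerProductSpace ℂ H]
    (ψ φ : ℕ → H) (c₁ s : ℝ) (hc₁ : 0 < c₁) (hs : 1 / 2 < s)
    (hcross : ∀ j l : ℕ,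
      ‖(inner ℂ (ψ j) (φ l) : ℂ)‖ ≤ c₁ * (1 + |(j : ℝ) - (l : ℝ)|) ^ (-s))
    (n m : ℕ) (hn : 1 ≤ n) (hnm : n < m)
    (lam : ℝ) (hlam : 0 < lam) :
    ((1 / lam) * ∑' j : ℕ, ∑ l ∈ Finset.range n,
        ‖(inner ℂ (ψ (m + j)) (φ l) : ℂ)‖ ^ 2)
      ≤ (c₁ ^ 2 / (2 * s - 1)) * (1 / lam) * (n : ℝ)
          * ((m : ℝ) - (n : ℝ)) ^ (-(2 * s - 1)) :=
  stmt_11_general ψ φ c₁ s hs hcross n m hnm lam hlam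
end

section
/- Let S be the frame operator of a frame {ψ_j} with lower bound A, let Q_n be the orthogonal projection onto G_n, and let W_n = Q_n S_m |_{G_n} be invertible with ‖S − W_n‖ ≤ B_{m,n} < A on G_n and ‖W_n^{-1}‖ ≤ 1/(A − B_{m,n}). Then for every f ∈ H, ‖S^{-1}f − W_n^{-1}Q_n f‖ ≤ (1/A)‖f − Q_n f‖ + (1/A)·(B_{m,n}/(A − B_{m,n}))·‖f‖. -/
open scoped InnerProductSpace

/-! The error `S⁻¹f - W_n⁻¹Q_n f` is `S⁻¹` applied to `(f - Q_n f) - (S - W_n) W_n⁻¹Q_n f`, since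
`W_n W_n⁻¹ Q_n f = Q_n f`. The first term is the projection error; the second is bounded by
`B_{m,n} ‖W_n⁻¹‖ ‖Q_n f‖ ≤ B_{m,n} ‖f‖ / (A - B_{m,n})`, because an orthogonal projection does not
increase norms. Applying `‖S⁻¹‖ ≤ 1/A` gives the estimate. -/

theorem norm_le_of_inner_sub_self_eq_zero {𝕜 E : Type*} [RCLike 𝕜] [NormedAddCommGroup E]
    [InnerProductSpace 𝕜 E] {g p : E} (h : ⟪g - p, p⟫_𝕜 = 0) : ‖p‖ ≤ ‖g‖ := by
  have hpyth : ‖g‖ * ‖g‖ = ‖g - p‖ * ‖g - p‖ + ‖p‖ * ‖p‖ := by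
    simpa using norm_add_sq_eq_norm_sq_add_norm_sq_of_inner_eq_zero (𝕜 := 𝕜) _ _ h
  exact mul_self_le_mul_self_iff (norm_nonneg p) (norm_nonneg g) |>.2 <|
    hpyth ▸ le_add_of_nonneg_left (mul_self_nonneg _)

theorem norm_sub_le_of_leftInverse {𝓕 E F : Type*} [SeminormedAddCommGroup E]
    [SeminormedAddCommGroup F] [FunLike 𝓕 E F] [AddMonoidHomClass 𝓕 E F]
    (Sinv : 𝓕) (S : F → E) (hinv : ∀ x, Sinv (S x) = x) {c : ℝ} (hc : 0 ≤ c)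
    (hbound : ∀ x, ‖Sinv x‖ ≤ c * ‖x‖) (f : E) (x : F) (y : E) :
    ‖Sinv f - x‖ ≤ c * (‖f - y‖ + ‖S x - y‖) := by
  have hdecomp : Sinv f - x = Sinv ((f - y) - (S x - y)) := by
    rw [sub_sub_sub_cancel_right, map_sub, hinv]
  rw [hdecomp]
  exact (hbound _).trans (mul_le_mul_of_nonneg_left (norm_sub_le _ _) hc)

theorem stmt_12_general {H : Type*} [NormedAddCommGroup H] [InnerProductSpace ℂ H]
    (Gn : Submodule ℂ H)
    (S Sinv : H →L[ℂ] H)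
    (hSinv₁ : ∀ f, Sinv (S f) = f)
    (A : ℝ) (hSinvnorm : ∀ f, ‖Sinv f‖ ≤ (1 / A) * ‖f‖)
    (Q : H → H) (hQmem : ∀ g, Q g ∈ Gn)
    (hQorth : ∀ g, ∀ h ∈ Gn, (inner ℂ (g - Q g) h : ℂ) = 0)
    (Sm : H →L[ℂ] H)
    (Bmn : ℝ) (hBmn0 : 0 ≤ Bmn) (hBmnA : Bmn < A)
    (hSW : ∀ g ∈ Gn, ‖S g - Q (Sm g)‖ ≤ Bmn * ‖g‖)
    (T : H → H) (hTmem : ∀ f, T f ∈ Gn)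
    (hTinv : ∀ f, Q (Sm (T f)) = Q f)
    (hTnorm : ∀ f, ‖T f‖ ≤ (1 / (A - Bmn)) * ‖Q f‖) :
    ∀ f : H, ‖Sinv f - T f‖
      ≤ (1 / A) * ‖f - Q f‖ + (1 / A) * (Bmn / (A - Bmn)) * ‖f‖ := by
  intro f
  have hA : 0 < A := hBmn0.trans_lt hBmnA
  have hAB : 0 < A - Bmn := sub_pos.mpr hBmnA
  have hQf : ‖Q f‖ ≤ ‖f‖ := norm_le_of_inner_sub_self_eq_zero (hQorth f (Q f) (hQmem f))
  have hTf : ‖T f‖ ≤ 1 / (A - Bmn) * ‖f‖ := (hTnorm f).trans (by gcongr)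
  have hW : ‖S (T f) - Q f‖ ≤ Bmn * ‖T f‖ := hTinv f ▸ hSW _ (hTmem f)
  calc ‖Sinv f - T f‖ ≤ 1 / A * (‖f - Q f‖ + ‖S (T f) - Q f‖) :=
        norm_sub_le_of_leftInverse Sinv S hSinv₁ (by positivity) hSinvnorm f (T f) (Q f)
    _ ≤ 1 / A * (‖f - Q f‖ + Bmn * (1 / (A - Bmn) * ‖f‖)) := by
        gcongr
        exact hW.trans (by gcongr)
    _ = (1 / A) * ‖f - Q f‖ + (1 / A) * (Bmn / (A - Bmn)) * ‖f‖ := by ring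

/-- error decomposition (4.8) with Lemmas 4.1–4.2. Here `Sinv = S⁻¹` with
`‖S⁻¹‖ ≤ 1/A`, `Q` is the orthogonal projection onto `G_n`, `Sm` is the partial frame
operator, `T = W_n⁻¹ Q_n` (characterized by `T f ∈ G_n`, `Q(S_m(T f)) = Q f`, and the bound
`‖T f‖ ≤ (1/(A - B_{m,n})) ‖Q f‖`), and `‖(S - W_n) g‖ ≤ B_{m,n} ‖g‖` on `G_n`.  Then
`‖S⁻¹ f - W_n⁻¹ Q_n f‖ ≤ (1/A) ‖f - Q_n f‖ + (1/A)(B_{m,n}/(A - B_{m,n})) ‖f‖`. -/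
theorem stmt_12 {H : Type*} [NormedAddCommGroup H] [InnerProductSpace ℂ H]
    [CompleteSpace H]
    (Gn : Submodule ℂ H)
    (S Sinv : H →L[ℂ] H)
    (hSinv₁ : ∀ f, Sinv (S f) = f) (hSinv₂ : ∀ f, S (Sinv f) = f)
    (A : ℝ) (hA : 0 < A) (hSinvnorm : ∀ f, ‖Sinv f‖ ≤ (1 / A) * ‖f‖)
    (Q : H → H) (hQmem : ∀ g, Q g ∈ Gn)
    (hQorth : ∀ g, ∀ h ∈ Gn, (inner ℂ (g - Q g) h : ℂ) = 0)
    (Sm : H →L[ℂ] H)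
    (Bmn : ℝ) (hBmn0 : 0 ≤ Bmn) (hBmnA : Bmn < A)
    (hSW : ∀ g ∈ Gn, ‖S g - Q (Sm g)‖ ≤ Bmn * ‖g‖)
    (T : H → H) (hTmem : ∀ f, T f ∈ Gn)
    (hTinv : ∀ f, Q (Sm (T f)) = Q f)
    (hTnorm : ∀ f, ‖T f‖ ≤ (1 / (A - Bmn)) * ‖Q f‖) :
    ∀ f : H, ‖Sinv f - T f‖
      ≤ (1 / A) * ‖f - Q f‖ + (1 / A) * (Bmn / (A - Bmn)) * ‖f‖ :=
  stmt_12_general Gn S Sinv hSinv₁ A hSinvnorm Q hQmem hQorth Sm Bmn hBmn0 hBmnA hSW T hTmem hTinv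
    hTnorm
end

section
/- Let W_n = Q_n S_m|_{G_n} be invertible on G_n with ‖W_n^{-1}‖ ≤ 2/A, where S_m has operator norm at most B, and define f_{n,m} = W_n^{-1} Q_n S_m f. Then ‖f − f_{n,m}‖ ≤ (1 + 2B/A)·‖f − Q_n f‖. -/
/-! The Galerkin solution `fnm` and `Q f` both lie in `K`, and `Q S` maps their difference to
`Q S (Q f - f)`, since `Q S fnm = Q S f` and `Q` is linear. Stability of `Q S` on `K` turns this
into `‖Q f - fnm‖ ≤ C B ‖f - Q f‖`, and the triangle inequality through `Q f` gives the
quasi-optimality bound `‖f - fnm‖ ≤ (1 + C B) ‖f - Q f‖`. -/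

open Submodule

section

variable {𝕜 E : Type*} [RCLike 𝕜] [NormedAddCommGroup E] [InnerProductSpace 𝕜 E]

/-- Stands in for `Submodule.orthogonalProjection`, which requires `K.HasOrthogonalProjection`. -/
structure IsOrthogonalProjectionOnto (K : Submodule 𝕜 E) (Q : E → E) : Prop where
  mem : ∀ x, Q x ∈ K
  sub_mem_orthogonal : ∀ x, x - Q x ∈ Kᗮ

namespace IsOrthogonalProjectionOnto

variable {K : Submodule 𝕜 E} {Q : E → E}

theorem eq_of_mem_of_sub_mem_orthogonal (hQ : IsOrthogonalProjectionOnto K Q) {x a : E}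
    (ha : a ∈ K) (hxa : x - a ∈ Kᗮ) : a = Q x := by
  have hK : a - Q x ∈ K := K.sub_mem ha (hQ.mem x)
  have hKperp : a - Q x ∈ Kᗮ := by
    simpa only [sub_sub_sub_cancel_left] using Kᗮ.sub_mem (hQ.sub_mem_orthogonal x) hxa
  have : a - Q x ∈ K ⊓ Kᗮ := ⟨hK, hKperp⟩
  rw [inf_orthogonal_eq_bot, mem_bot] at this
  exact sub_eq_zero.mp this

theorem map_sub (hQ : IsOrthogonalProjectionOnto K Q) (x y : E) : Q (x - y) = Q x - Q y := by
  refine (hQ.eq_of_mem_of_sub_mem_orthogonal (K.sub_mem (hQ.mem x) (hQ.mem y)) ?_).symm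
  have := Kᗮ.sub_mem (hQ.sub_mem_orthogonal x) (hQ.sub_mem_orthogonal y)
  rwa [sub_sub_sub_comm] at this

theorem norm_le (hQ : IsOrthogonalProjectionOnto K Q) (x : E) : ‖Q x‖ ≤ ‖x‖ := by
  have hperp : inner 𝕜 (x - Q x) (Q x) = 0 :=
    (mem_orthogonal' K _).mp (hQ.sub_mem_orthogonal x) _ (hQ.mem x)
  have hpyth := norm_add_sq_eq_norm_sq_add_norm_sq_of_inner_eq_zero _ _ hperp
  rw [sub_add_cancel] at hpyth
  exact sq_le_sq₀ (norm_nonneg _) (norm_nonneg _) |>.mp (by nlinarith [sq_nonneg ‖x - Q x‖])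

end IsOrthogonalProjectionOnto

section Galerkin

variable {K : Submodule 𝕜 E} {Q : E → E} {S : E →ₗ[𝕜] E} {B C : ℝ} {f fnm : E}

theorem norm_proj_sub_galerkin_le (hQ : IsOrthogonalProjectionOnto K Q)
    (hS : ∀ g, ‖S g‖ ≤ B * ‖g‖) (hC : 0 ≤ C) (hstable : ∀ g ∈ K, ‖g‖ ≤ C * ‖Q (S g)‖)
    (hfnm_mem : fnm ∈ K) (hfnm : Q (S fnm) = Q (S f)) :
    ‖Q f - fnm‖ ≤ C * B * ‖f - Q f‖ := by
  have hres : Q (S (Q f - fnm)) = Q (S (Q f - f)) := by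
    rw [map_sub, map_sub, hQ.map_sub, hQ.map_sub, hfnm]
  calc ‖Q f - fnm‖ ≤ C * ‖Q (S (Q f - fnm))‖ := hstable _ (K.sub_mem (hQ.mem f) hfnm_mem)
    _ = C * ‖Q (S (Q f - f))‖ := by rw [hres]
    _ ≤ C * (B * ‖Q f - f‖) := by gcongr; exact (hQ.norm_le _).trans (hS _)
    _ = C * B * ‖f - Q f‖ := by rw [norm_sub_rev, mul_assoc]

theorem norm_sub_galerkin_le (hQ : IsOrthogonalProjectionOnto K Q)
    (hS : ∀ g, ‖S g‖ ≤ B * ‖g‖) (hC : 0 ≤ C) (hstable : ∀ g ∈ K, ‖g‖ ≤ C * ‖Q (S g)‖)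
    (hfnm_mem : fnm ∈ K) (hfnm : Q (S fnm) = Q (S f)) :
    ‖f - fnm‖ ≤ (1 + C * B) * ‖f - Q f‖ :=
  calc ‖f - fnm‖ ≤ ‖f - Q f‖ + ‖Q f - fnm‖ := norm_sub_le_norm_sub_add_norm_sub _ _ _
    _ ≤ ‖f - Q f‖ + C * B * ‖f - Q f‖ := by
      gcongr; exact norm_proj_sub_galerkin_le hQ hS hC hstable hfnm_mem hfnm
    _ = (1 + C * B) * ‖f - Q f‖ := by ring

end Galerkin

end

theorem stmt_13_general {H : Type*} [NormedAddCommGroup H] [InnerProductSpace ℂ H]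
    (Gn : Submodule ℂ H)
    (Q : H → H) (hQmem : ∀ g, Q g ∈ Gn)
    (hQorth : ∀ g, ∀ h ∈ Gn, (inner ℂ (g - Q g) h : ℂ) = 0)
    (Sm : H →L[ℂ] H) (A B : ℝ) (hA : 0 < A)
    (hSm : ∀ g : H, ‖Sm g‖ ≤ B * ‖g‖)
    (hWinv : ∀ g ∈ Gn, ‖g‖ ≤ (2 / A) * ‖Q (Sm g)‖)
    (f fnm : H) (hfnm_mem : fnm ∈ Gn)
    (hfnm : Q (Sm fnm) = Q (Sm f)) :
    ‖f - fnm‖ ≤ (1 + 2 * B / A) * ‖f - Q f‖ := by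
  have hQ : IsOrthogonalProjectionOnto Gn Q :=
    ⟨hQmem, fun g => (mem_orthogonal' Gn _).mpr (hQorth g)⟩
  have h := norm_sub_galerkin_le (S := Sm.toLinearMap) hQ hSm (by positivity) hWinv hfnm_mem hfnm
  rwa [div_mul_eq_mul_div] at h

/-- if `W_n = Q_n S_m|_{G_n}` is invertible with `‖W_n⁻¹‖ ≤ 2/A`
(encoded by `‖g‖ ≤ (2/A) ‖Q(S_m g)‖` for `g ∈ G_n`), `‖S_m‖ ≤ B`, and
`f_{n,m} = W_n⁻¹ Q_n S_m f` (encoded by `f_{n,m} ∈ G_n` and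
`Q(S_m f_{n,m}) = Q(S_m f)`), then `‖f - f_{n,m}‖ ≤ (1 + 2B/A) ‖f - Q_n f‖`. -/
theorem stmt_13 {H : Type*} [NormedAddCommGroup H] [InnerProductSpace ℂ H]
    [CompleteSpace H]
    (Gn : Submodule ℂ H)
    (Q : H → H) (hQmem : ∀ g, Q g ∈ Gn)
    (hQorth : ∀ g, ∀ h ∈ Gn, (inner ℂ (g - Q g) h : ℂ) = 0)
    (Sm : H →L[ℂ] H) (A B : ℝ) (hA : 0 < A) (hB : 0 < B)
    (hSm : ∀ g : H, ‖Sm g‖ ≤ B * ‖g‖)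
    (hWinv : ∀ g ∈ Gn, ‖g‖ ≤ (2 / A) * ‖Q (Sm g)‖)
    (f fnm : H) (hfnm_mem : fnm ∈ Gn)
    (hfnm : Q (Sm fnm) = Q (Sm f)) :
    ‖f - fnm‖ ≤ (1 + 2 * B / A) * ‖f - Q f‖ :=
  stmt_13_general Gn Q hQmem hQorth Sm A B hA hSm hWinv f fnm hfnm_mem hfnm
end
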